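/- arXiv:1305.2533 — 5 statements merged into one kernel-verified Lean document; each statement's English description precedes it below -/
import Mathlib

section
/- Let A be an n×n real matrix with δ ≤ a_{ij} ≤ 1 for all i,j, where 0 < δ < 1. Under the probability measure P(σ) = (∏_{i=1}^n a_{iσ(i)}) / per(A) on S_n, the expected number of cycles of a random permutation σ is at most 2 + 2δ^{-2} ln n. -/
open scoped Classical

/-- The number of cycles of a permutation, counting fixed points as cycles. -/
def cycleCount {n : ℕ} (σ : Equiv.Perm (Fin n)) : ℕ :=
  σ.cycleType.card + (Finset.univ.filter fun i => σ i = i).card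

/-!
Weight `σ` by `w σ = ∏ k, A k (σ k)` and let `p σ x` be the length of the cycle of `σ` through
`x`, so that `σ` has `∑ x, 1 / p σ x` cycles. Put `G ℓ = ∑ σ, w σ · #{x | p σ x = ℓ}`
(`cyclePointWeight`). If `x` lies on a cycle of length `ℓ` and `y` does not, then `σ * swap x y`
merges the two cycles, and `(σ, x, y)` can be read off from `(σ * swap x y, x)`: `y` is the point
that `ℓ` steps of the merged permutation send to `x`. Since only two factors of the weight change,
`w` drops by at most `δ²`, and this injection gives `δ² (n - ℓ) G ℓ ≤ n · per A`. For `ℓ ≤ n / 2`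
this bounds `G ℓ / ℓ` by `(1 / ℓ + 1 / (n - ℓ)) per A / δ²`, and these sum to at most
`2 log n · per A / δ²` once `log n ≥ 3 / 2`; the terms with `ℓ > n / 2` contribute at most
`2 per A` because `∑ ℓ, G ℓ = n · per A`. For `n ≤ 4` the trivial bound of `n` cycles suffices.
-/

open Equiv Finset Function

theorem three_div_two_le_log_five : 3 / 2 ≤ Real.log 5 := by
  rw [Real.le_log_iff_exp_le (by norm_num)]
  have hexp3 : Real.exp (3 / 2) ^ 2 < 5 ^ 2 := by
    rw [← Real.exp_nat_mul, show ((2 : ℕ) : ℝ) * (3 / 2) = (3 : ℕ) by norm_num, ← Real.exp_one_pow]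
    calc Real.exp 1 ^ 3 < 2.7182818286 ^ 3 :=
          pow_lt_pow_left₀ Real.exp_one_lt_d9 (Real.exp_pos 1).le (by norm_num)
      _ < 5 ^ 2 := by norm_num
  exact (pow_lt_pow_iff_left₀ (Real.exp_pos _).le (by norm_num) (by norm_num)).1 hexp3 |>.le

theorem sum_Icc_inv_add_inv_sub_le {n : ℕ} (hn : 5 ≤ n) :
    ∑ ℓ ∈ Icc 1 (n / 2), ((ℓ : ℝ)⁻¹ + ((n - ℓ : ℕ) : ℝ)⁻¹) ≤ 2 * Real.log n := by
  set m := n / 2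
  have hharmonic : ∑ k ∈ Ico 1 n, (k : ℝ)⁻¹ ≤ 1 + Real.log n := by
    have h := harmonic_le_one_add_log (n - 1)
    rw [harmonic_eq_sum_Icc, ← Ico_add_one_right_eq_Icc, Nat.sub_add_cancel (by omega)] at h
    push_cast at h
    have hpos : (0 : ℝ) < (n - 1 : ℕ) := by exact_mod_cast (by omega : 0 < n - 1)
    refine h.trans ?_
    gcongr
    exact_mod_cast Nat.sub_le n 1
  have hreflect : ∑ ℓ ∈ Icc 1 m, ((n - ℓ : ℕ) : ℝ)⁻¹ = ∑ k ∈ Ico (n - m) n, (k : ℝ)⁻¹ := by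
    rw [← Ico_add_one_right_eq_Icc, sum_Ico_reflect (fun k => (k : ℝ)⁻¹) 1 (by omega)]
    congr 2
    omega
  have hlog : 3 / 2 ≤ Real.log n :=
    three_div_two_le_log_five.trans (Real.log_le_log (by norm_num) (by exact_mod_cast hn))
  have hm : (m : ℝ)⁻¹ ≤ 2⁻¹ := inv_anti₀ (by norm_num) (by exact_mod_cast (by omega : 2 ≤ m))
  calc ∑ ℓ ∈ Icc 1 m, ((ℓ : ℝ)⁻¹ + ((n - ℓ : ℕ) : ℝ)⁻¹)
      = ∑ k ∈ Ico 1 (m + 1), (k : ℝ)⁻¹ + ∑ k ∈ Ico (n - m) n, (k : ℝ)⁻¹ := by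
        rw [sum_add_distrib, hreflect, Ico_add_one_right_eq_Icc]
    _ ≤ ∑ k ∈ Ico 1 (m + 1), (k : ℝ)⁻¹ + ∑ k ∈ Ico m n, (k : ℝ)⁻¹ := by
        gcongr
        omega
    _ = (m : ℝ)⁻¹ + ∑ k ∈ Ico 1 n, (k : ℝ)⁻¹ := by
        rw [sum_Ico_succ_top (by omega),
          ← sum_Ico_consecutive _ (by omega : 1 ≤ m) (by omega : m ≤ n)]
        ring
    _ ≤ 2 * Real.log n := by linarith

theorem le_two_add_two_mul_log {n : ℕ} (hn : n ≤ 4) : (n : ℝ) ≤ 2 + 2 * Real.log n := by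
  have hlog2 := Real.log_two_gt_d9
  interval_cases n
  · norm_num
  · norm_num
  · norm_num
    linarith
  · have : Real.log 2 ≤ Real.log 3 := Real.log_le_log (by norm_num) (by norm_num)
    norm_num
    linarith
  · have : Real.log 4 = 2 * Real.log 2 := by
      rw [show (4 : ℝ) = 2 ^ 2 by norm_num, Real.log_pow, Nat.cast_ofNat]
    norm_num
    linarith

namespace Equiv.Perm

theorem minimalPeriod_pos {α : Type*} [Finite α] (σ : Perm α) (x : α) :
    0 < minimalPeriod σ x :=
  minimalPeriod_pos_of_mem_periodicPts (σ.injective.mem_periodicPts x)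

variable {α : Type*} [Fintype α]

theorem sum_inv_minimalPeriod_le_card (σ : Perm α) :
    ∑ x, (minimalPeriod σ x : ℝ)⁻¹ ≤ Fintype.card α := by
  rw [← card_univ, card_eq_sum_ones, Nat.cast_sum, Nat.cast_one]
  exact sum_le_sum fun x _ => inv_le_one_of_one_le₀ (by exact_mod_cast σ.minimalPeriod_pos x)

variable [DecidableEq α]

theorem card_filter_sameCycle (σ : Perm α) (x : α) :
    #{y | σ.SameCycle x y} = minimalPeriod σ x := by
  have horbit : ({y | σ.SameCycle x y} : Finset α)
      = (range (minimalPeriod σ x)).image fun k => (σ ^ k) x := by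
    ext y
    simp only [mem_filter, mem_univ, true_and, mem_image, mem_range]
    constructor
    · intro hxy
      obtain ⟨k, -, rfl⟩ := hxy.exists_pow_eq'
      exact ⟨k % minimalPeriod σ x, Nat.mod_lt _ (σ.minimalPeriod_pos x), by
        simp only [coe_pow, iterate_mod_minimalPeriod_eq]⟩
    · rintro ⟨k, -, rfl⟩
      exact sameCycle_pow_right.2 (SameCycle.refl σ x)
  rw [horbit, card_image_of_injOn, card_range]
  intro a ha b hb hab
  rw [coe_range] at ha hb
  exact iterate_injOn_Iio_minimalPeriod ha hb (by simpa only [coe_pow] using hab)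

theorem minimalPeriod_eq_card_support_cycleOf {σ : Perm α} {x : α} (hx : x ∈ σ.support) :
    minimalPeriod σ x = #(σ.cycleOf x).support := by
  rw [← card_filter_sameCycle]
  congr 1
  ext y
  rw [mem_filter, mem_support_cycleOf_iff]
  simp [hx]

theorem sum_support_inv_minimalPeriod (σ : Perm α) :
    ∑ x ∈ σ.support, (minimalPeriod σ x : ℝ)⁻¹ = #σ.cycleFactorsFinset := by
  rw [← sum_fiberwise_of_maps_to fun x hx => cycleOf_mem_cycleFactorsFinset_iff.2 hx,
    card_eq_sum_ones, Nat.cast_sum]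
  refine sum_congr rfl fun c hc => ?_
  have hfiber : {x ∈ σ.support | σ.cycleOf x = c} = c.support := by
    ext x
    constructor
    · intro hx
      obtain ⟨hxσ, rfl⟩ := mem_filter.1 hx
      exact mem_support_cycleOf_iff.2 ⟨SameCycle.refl σ x, hxσ⟩
    · intro hx
      exact mem_filter.2 ⟨mem_cycleFactorsFinset_support_le hc hx, (cycle_is_cycleOf hx hc).symm⟩
  have hperiod : ∀ x ∈ c.support, (minimalPeriod σ x : ℝ)⁻¹ = (#c.support : ℝ)⁻¹ := fun x hx => by
    rw [minimalPeriod_eq_card_support_cycleOf (mem_cycleFactorsFinset_support_le hc hx),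
      ← cycle_is_cycleOf hx hc]
  have hpos : (0 : ℝ) < #c.support := by
    exact_mod_cast (zero_lt_two.trans_le (mem_cycleFactorsFinset_iff.1 hc).1.two_le_card_support)
  rw [hfiber, sum_congr rfl hperiod, sum_const, nsmul_eq_mul, mul_inv_cancel₀ hpos.ne',
    Nat.cast_one]

theorem sum_compl_support_inv_minimalPeriod (σ : Perm α) :
    ∑ x ∈ σ.supportᶜ, (minimalPeriod σ x : ℝ)⁻¹ = #σ.supportᶜ := by
  rw [card_eq_sum_ones, Nat.cast_sum]
  refine sum_congr rfl fun x hx => ?_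
  rw [minimalPeriod_eq_one_iff_isFixedPt.2 (notMem_support.1 (mem_compl.1 hx))]
  simp

theorem card_filter_not_sameCycle (σ : Perm α) (x : α) :
    #{y | ¬σ.SameCycle x y} = Fintype.card α - minimalPeriod σ x := by
  rw [filter_not, card_sdiff_of_subset (filter_subset _ _), card_filter_sameCycle, card_univ]

end Equiv.Perm

theorem cycleCount_eq_sum_inv_minimalPeriod {n : ℕ} (σ : Perm (Fin n)) :
    (cycleCount σ : ℝ) = ∑ i, (minimalPeriod σ i : ℝ)⁻¹ := by
  have hfixed : ({i | σ i = i} : Finset (Fin n)) = σ.supportᶜ := by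
    ext i
    simp
  rw [← sum_compl_add_sum σ.support, σ.sum_support_inv_minimalPeriod,
    σ.sum_compl_support_inv_minimalPeriod, cycleCount, hfixed, Perm.cycleType_def,
    Multiset.card_map, ← card_def, Nat.cast_add, add_comm]

namespace Equiv.Perm

variable {α : Type*} [Fintype α] [DecidableEq α]

def splice (t : Perm α × α × α) : Perm α × α :=
  (t.1 * swap t.2.1 t.2.2, t.2.1)

noncomputable def spliceTriples (ℓ : ℕ) : Finset (Perm α × α × α) :=
  {t | minimalPeriod t.1 t.2.1 = ℓ ∧ ¬t.1.SameCycle t.2.1 t.2.2}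

theorem mul_swap_pow_minimalPeriod_apply {σ : Perm α} {x y : α} (hxy : ¬σ.SameCycle x y) :
    ((σ * swap x y) ^ minimalPeriod σ x) y = x := by
  have hpow : ∀ k, 1 ≤ k → k ≤ minimalPeriod σ x → ((σ * swap x y) ^ k) y = (σ ^ k) x := by
    intro k hk
    induction k, hk using Nat.le_induction with
    | base => intro _; simp
    | succ k hk ih =>
      intro hkp
      have hx : (σ ^ k) x ≠ x := fun h =>
        not_isPeriodicPt_of_pos_of_lt_minimalPeriod (n := k) (by omega)
          (show k < minimalPeriod σ x by omega)
          (by rwa [IsPeriodicPt, IsFixedPt, ← coe_pow])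
      have hy : (σ ^ k) x ≠ y := fun h => hxy (h ▸ sameCycle_pow_right.2 (SameCycle.refl σ x))
      rw [pow_succ', mul_apply, ih (by omega), mul_apply, swap_apply_of_ne_of_ne hx hy,
        pow_succ', mul_apply]
  rw [hpow _ (σ.minimalPeriod_pos x) le_rfl, coe_pow, iterate_minimalPeriod]

theorem injOn_splice (ℓ : ℕ) :
    Set.InjOn splice (spliceTriples (α := α) ℓ : Set (Perm α × α × α)) := by
  rintro ⟨σ, x, y⟩ ht ⟨σ', x', y'⟩ ht' heq
  simp only [spliceTriples, coe_filter, mem_univ, true_and, Set.mem_ofPred_eq] at ht ht'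
  simp only [splice, Prod.mk.injEq] at heq
  obtain ⟨hτ, rfl⟩ := heq
  have hy : y = y' := by
    have h := mul_swap_pow_minimalPeriod_apply ht.2
    have h' := mul_swap_pow_minimalPeriod_apply ht'.2
    rw [ht.1, hτ] at h
    rw [ht'.1] at h'
    exact EquivLike.injective _ (h.trans h'.symm)
  subst hy
  rw [mul_right_cancel hτ]

noncomputable def cyclePointWeight (w : Perm α → ℝ) (ℓ : ℕ) : ℝ :=
  ∑ σ : Perm α, (#{x | minimalPeriod σ x = ℓ} : ℝ) * w σ

variable {w : Perm α → ℝ}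

theorem cyclePointWeight_nonneg (hw : ∀ σ, 0 ≤ w σ) (ℓ : ℕ) : 0 ≤ cyclePointWeight w ℓ :=
  sum_nonneg fun σ _ => mul_nonneg (Nat.cast_nonneg _) (hw σ)

theorem sum_cyclePointWeight :
    ∑ ℓ ∈ Icc 1 (Fintype.card α), cyclePointWeight w ℓ = Fintype.card α * ∑ σ, w σ := by
  simp only [cyclePointWeight]
  rw [sum_comm, mul_sum]
  refine sum_congr rfl fun σ _ => ?_
  rw [← sum_mul, ← Nat.cast_sum, ← card_eq_sum_card_fiberwise fun x _ =>
    mem_Icc.2 ⟨σ.minimalPeriod_pos x, minimalPeriod_le_card⟩, card_univ]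

theorem sum_sum_inv_minimalPeriod_mul :
    ∑ σ : Perm α, (∑ x, (minimalPeriod σ x : ℝ)⁻¹) * w σ
      = ∑ ℓ ∈ Icc 1 (Fintype.card α), (ℓ : ℝ)⁻¹ * cyclePointWeight w ℓ := by
  simp_rw [cyclePointWeight, mul_sum]
  rw [sum_comm]
  refine sum_congr rfl fun σ _ => ?_
  rw [← sum_fiberwise_of_maps_to (g := fun x => minimalPeriod σ x) fun x _ =>
    mem_Icc.2 ⟨σ.minimalPeriod_pos x, minimalPeriod_le_card⟩, sum_mul]
  refine sum_congr rfl fun ℓ _ => ?_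
  rw [sum_congr rfl fun x hx => by rw [(mem_filter.1 hx).2], sum_const, nsmul_eq_mul]
  ring

theorem sum_spliceTriples (ℓ : ℕ) :
    ∑ t ∈ spliceTriples ℓ, w t.1 = (Fintype.card α - ℓ : ℕ) * cyclePointWeight w ℓ := by
  rw [spliceTriples, sum_filter, Fintype.sum_prod_type, cyclePointWeight, mul_sum]
  refine sum_congr rfl fun σ _ => ?_
  have hx : ∀ x, ∑ y, (if minimalPeriod σ x = ℓ ∧ ¬σ.SameCycle x y then w σ else 0)
      = if minimalPeriod σ x = ℓ then (Fintype.card α - ℓ : ℕ) * w σ else 0 := fun x => by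
    split_ifs with hx
    · simp only [hx, true_and]
      rw [← sum_filter, sum_const, card_filter_not_sameCycle, hx, nsmul_eq_mul]
    · simp [hx]
  rw [Fintype.sum_prod_type, sum_congr rfl fun x _ => hx x, ← sum_filter, sum_const, nsmul_eq_mul]
  ring

theorem mul_cyclePointWeight_le (hw : ∀ σ, 0 ≤ w σ) {c : ℝ}
    (hc : ∀ σ x y, x ≠ y → c * w σ ≤ w (σ * swap x y)) (ℓ : ℕ) :
    c * ((Fintype.card α - ℓ : ℕ) * cyclePointWeight w ℓ) ≤ Fintype.card α * ∑ σ, w σ := by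
  calc c * ((Fintype.card α - ℓ : ℕ) * cyclePointWeight w ℓ)
      = ∑ t ∈ spliceTriples ℓ, c * w t.1 := by rw [← mul_sum, sum_spliceTriples]
    _ ≤ ∑ t ∈ spliceTriples ℓ, w (splice t).1 := by
        refine sum_le_sum fun t ht => hc _ _ _ fun hxy => ?_
        exact (mem_filter.1 ht).2.2 (hxy ▸ SameCycle.refl _ _)
    _ = ∑ u ∈ (spliceTriples ℓ).image splice, w u.1 :=
        (sum_image (f := fun u => w u.1) (injOn_splice ℓ)).symm
    _ ≤ ∑ u : Perm α × α, w u.1 :=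
        sum_le_sum_of_subset_of_nonneg (subset_univ _) fun u _ _ => hw u.1
    _ = Fintype.card α * ∑ σ, w σ := by
        rw [Fintype.sum_prod_type, mul_sum]
        simp [mul_comm]

theorem sum_inv_mul_cyclePointWeight_le_of_le_half (hw : ∀ σ, 0 ≤ w σ) {c : ℝ} (hc0 : 0 < c)
    (hc : ∀ σ x y, x ≠ y → c * w σ ≤ w (σ * swap x y)) (hα : 5 ≤ Fintype.card α) :
    ∑ ℓ ∈ Icc 1 (Fintype.card α) with ℓ ≤ Fintype.card α / 2, (ℓ : ℝ)⁻¹ * cyclePointWeight w ℓ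
      ≤ 2 * Real.log (Fintype.card α) / c * ∑ σ, w σ := by
  set N := Fintype.card α
  set P := ∑ σ, w σ
  have hP : 0 ≤ P := sum_nonneg fun σ _ => hw σ
  have hfilter : {ℓ ∈ Icc 1 N | ℓ ≤ N / 2} = Icc 1 (N / 2) := by
    ext ℓ
    simp only [mem_filter, mem_Icc]
    omega
  have hterm : ∀ ℓ ∈ Icc 1 (N / 2),
      (ℓ : ℝ)⁻¹ * cyclePointWeight w ℓ ≤ P / c * ((ℓ : ℝ)⁻¹ + ((N - ℓ : ℕ) : ℝ)⁻¹) := by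
    intro ℓ hℓ
    rw [mem_Icc] at hℓ
    have hℓ0 : (0 : ℝ) < ℓ := by exact_mod_cast hℓ.1
    have hNℓ : (0 : ℝ) < (N - ℓ : ℕ) := by exact_mod_cast Nat.sub_pos_of_lt (by omega)
    have hN : (N : ℝ) = ℓ + (N - ℓ : ℕ) := by rw [Nat.cast_sub (by omega)]; ring
    have key := mul_cyclePointWeight_le hw hc ℓ
    calc (ℓ : ℝ)⁻¹ * cyclePointWeight w ℓ
        = (ℓ : ℝ)⁻¹ * (c * ((N - ℓ : ℕ) * cyclePointWeight w ℓ)) / (c * (N - ℓ : ℕ)) := by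
          field_simp
      _ ≤ (ℓ : ℝ)⁻¹ * (N * P) / (c * (N - ℓ : ℕ)) := by gcongr
      _ = P / c * ((ℓ : ℝ)⁻¹ + ((N - ℓ : ℕ) : ℝ)⁻¹) := by
          rw [hN]
          field_simp
          ring
  calc ∑ ℓ ∈ Icc 1 N with ℓ ≤ N / 2, (ℓ : ℝ)⁻¹ * cyclePointWeight w ℓ
      ≤ ∑ ℓ ∈ Icc 1 (N / 2), P / c * ((ℓ : ℝ)⁻¹ + ((N - ℓ : ℕ) : ℝ)⁻¹) := by
        rw [hfilter]
        exact sum_le_sum hterm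
    _ ≤ P / c * (2 * Real.log N) := by
        rw [← mul_sum]
        gcongr
        exact sum_Icc_inv_add_inv_sub_le hα
    _ = 2 * Real.log N / c * P := by ring

theorem sum_inv_mul_cyclePointWeight_le_of_half_lt (hw : ∀ σ, 0 ≤ w σ) :
    ∑ ℓ ∈ Icc 1 (Fintype.card α) with ¬ℓ ≤ Fintype.card α / 2,
      (ℓ : ℝ)⁻¹ * cyclePointWeight w ℓ ≤ 2 * ∑ σ, w σ := by
  set N := Fintype.card α
  have hG := cyclePointWeight_nonneg hw
  calc ∑ ℓ ∈ Icc 1 N with ¬ℓ ≤ N / 2, (ℓ : ℝ)⁻¹ * cyclePointWeight w ℓ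
      ≤ ∑ ℓ ∈ Icc 1 N with ¬ℓ ≤ N / 2, ((N / 2 + 1 : ℕ) : ℝ)⁻¹ * cyclePointWeight w ℓ := by
        refine sum_le_sum fun ℓ hℓ => mul_le_mul_of_nonneg_right ?_ (hG ℓ)
        have : N / 2 + 1 ≤ ℓ := by simp only [mem_filter] at hℓ; omega
        exact inv_anti₀ (by positivity) (by exact_mod_cast this)
    _ ≤ ∑ ℓ ∈ Icc 1 N, ((N / 2 + 1 : ℕ) : ℝ)⁻¹ * cyclePointWeight w ℓ :=
        sum_le_sum_of_subset_of_nonneg (filter_subset _ _) fun ℓ _ _ =>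
          mul_nonneg (by positivity) (hG ℓ)
    _ = ((N / 2 + 1 : ℕ) : ℝ)⁻¹ * (N * ∑ σ, w σ) := by rw [← mul_sum, sum_cyclePointWeight]
    _ ≤ 2 * ∑ σ, w σ := by
        rw [inv_mul_le_iff₀ (by positivity), ← mul_assoc]
        gcongr
        · exact sum_nonneg fun σ _ => hw σ
        · exact_mod_cast (by omega : N ≤ (N / 2 + 1) * 2)

theorem sum_sum_inv_minimalPeriod_mul_le (hw : ∀ σ, 0 ≤ w σ) {c : ℝ} (hc0 : 0 < c) (hc1 : c ≤ 1)
    (hc : ∀ σ x y, x ≠ y → c * w σ ≤ w (σ * swap x y)) :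
    ∑ σ : Perm α, (∑ x, (minimalPeriod σ x : ℝ)⁻¹) * w σ
      ≤ (2 + 2 * Real.log (Fintype.card α) / c) * ∑ σ, w σ := by
  have hP : 0 ≤ ∑ σ, w σ := sum_nonneg fun σ _ => hw σ
  rcases le_or_gt (Fintype.card α) 4 with hα | hα
  · have hlog : 2 * Real.log (Fintype.card α) ≤ 2 * Real.log (Fintype.card α) / c :=
      le_div_self (by positivity) hc0 hc1
    calc ∑ σ : Perm α, (∑ x, (minimalPeriod σ x : ℝ)⁻¹) * w σ
        ≤ ∑ σ, (Fintype.card α : ℝ) * w σ :=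
          sum_le_sum fun σ _ => mul_le_mul_of_nonneg_right (sum_inv_minimalPeriod_le_card σ) (hw σ)
      _ ≤ (2 + 2 * Real.log (Fintype.card α) / c) * ∑ σ, w σ := by
          rw [← mul_sum]
          gcongr
          linarith [le_two_add_two_mul_log hα]
  · rw [sum_sum_inv_minimalPeriod_mul, ← sum_filter_add_sum_filter_not _ (· ≤ Fintype.card α / 2)]
    linarith [sum_inv_mul_cyclePointWeight_le_of_le_half hw hc0 hc hα,
      sum_inv_mul_cyclePointWeight_le_of_half_lt hw]

end Equiv.Perm

theorem sq_mul_prod_le_prod_mul_swap {α : Type*} [Fintype α] [DecidableEq α] {A : Matrix α α ℝ}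
    {δ : ℝ} (hδ : 0 ≤ δ) (hA : ∀ i j, δ ≤ A i j ∧ A i j ≤ 1) (σ : Perm α) {i j : α} (hij : i ≠ j) :
    δ ^ 2 * ∏ k, A k (σ k) ≤ ∏ k, A k ((σ * swap i j) k) := by
  have hsplit : ∀ τ : Perm α,
      ∏ k, A k (τ k) = A i (τ i) * A j (τ j) * ∏ k ∈ {i, j}ᶜ, A k (τ k) := fun τ => by
    rw [← prod_pair hij (f := fun k => A k (τ k)), prod_mul_prod_compl]
  have hrest : ∏ k ∈ {i, j}ᶜ, A k ((σ * swap i j) k) = ∏ k ∈ {i, j}ᶜ, A k (σ k) :=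
    prod_congr rfl fun k hk => by
      simp only [mem_compl, mem_insert, mem_singleton, not_or] at hk
      rw [Perm.mul_apply, swap_apply_of_ne_of_ne hk.1 hk.2]
  have hR : 0 ≤ ∏ k ∈ {i, j}ᶜ, A k (σ k) := prod_nonneg fun k _ => hδ.trans (hA k (σ k)).1
  have hold : A i (σ i) * A j (σ j) ≤ 1 :=
    mul_le_one₀ (hA i _).2 (hδ.trans (hA j _).1) (hA j _).2
  have hnew : δ ^ 2 ≤ A i (σ j) * A j (σ i) := by
    rw [sq]
    exact mul_le_mul (hA i _).1 (hA j _).1 hδ (hδ.trans (hA i _).1)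
  rw [hsplit, hsplit, hrest, Perm.mul_apply, Perm.mul_apply, swap_apply_left, swap_apply_right]
  calc δ ^ 2 * (A i (σ i) * A j (σ j) * ∏ k ∈ {i, j}ᶜ, A k (σ k))
      ≤ δ ^ 2 * (1 * ∏ k ∈ {i, j}ᶜ, A k (σ k)) := by gcongr
    _ ≤ A i (σ j) * A j (σ i) * ∏ k ∈ {i, j}ᶜ, A k (σ k) := by rw [one_mul]; gcongr

/-- Under `P(σ) = (∏ a_{iσ(i)})/per A`, with `δ ≤ a_{ij} ≤ 1`,
the expected number of cycles is at most `2 + 2δ⁻² ln n`. -/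
theorem expected_cycle_count_bound (n : ℕ) (δ : ℝ) (hδ0 : 0 < δ) (hδ1 : δ < 1)
    (A : Matrix (Fin n) (Fin n) ℝ)
    (hA : ∀ i j, δ ≤ A i j ∧ A i j ≤ 1) :
    (∑ σ : Equiv.Perm (Fin n), (cycleCount σ : ℝ) * ∏ k, A k (σ k)) /
      (∑ σ : Equiv.Perm (Fin n), ∏ k, A k (σ k)) ≤
    2 + 2 * Real.log n / δ ^ 2 := by
  have hweight : ∀ σ : Perm (Fin n), 0 < ∏ k, A k (σ k) := fun σ =>
    prod_pos fun k _ => hδ0.trans_le (hA k (σ k)).1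
  rw [div_le_iff₀ (sum_pos (fun σ _ => hweight σ) univ_nonempty)]
  simp_rw [cycleCount_eq_sum_inv_minimalPeriod]
  simpa only [Fintype.card_fin] using Perm.sum_sum_inv_minimalPeriod_mul_le
    (fun σ => (hweight σ).le) (pow_pos hδ0 2) (pow_le_one₀ hδ0.le hδ1.le)
    fun σ _ _ hij => sq_mul_prod_le_prod_mul_swap hδ0.le hA σ hij
end

section
/- Let m, n be positive integers and let Δ_{m,n} be the set of vectors (α_1,...,α_n) of non-negative integers with α_1 + ... + α_n = m. Suppose P is a probability measure on Δ_{m,n} of the form P(α) = w(α)/(α_1!⋯α_n!) for non-negative weights w, and for some 0 < δ ≤ 1 the weights satisfy w(α) ≤ δ^{-1} w(β) whenever Σ_i |α_i − β_i| = 2. If m ≥ δn, then P({α : max_i α_i ≥ 3m ln n / (δ n ln ln n)}) ≤ 1/n. -/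
/-!
Write `P(α) = w(α) / ∏ αₖ!` and `Tᵢ(a) = P(αᵢ ≥ a)`. Moving one unit from coordinate `i` to a
coordinate `j ≠ i` is a bijection from `{αᵢ ≥ a + 1}` onto `{βᵢ ≥ a, βⱼ ≥ 1}`; it changes `w` by a
factor at least `δ` and the factorial weight by `αᵢ / βⱼ`, so `αᵢ P(α) ≤ δ⁻¹ βⱼ P(β)`. Summing over
the `n - 1` choices of `j` and using `∑_{j ≠ i} βⱼ ≤ m` gives
`(n - 1) (a + 1) Tᵢ(a + 1) ≤ δ⁻¹ m Tᵢ(a)`, hence `Tᵢ(t) ≤ Cᵗ / t!` with `C = m / (δ (n - 1))`.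
After a union bound over the `n` coordinates it remains to show `n² Cᵗ ≤ t!` for
`t = ⌈3 m ln n / (δ n ln ln n)⌉`. By Stirling, `ln t! ≥ t ln t - t + 1`, and the resulting
inequality reduces to one in `λ = ln ln n` that holds because `λ - 3 ln λ` is minimal at `λ = 3`.
-/

namespace LargeCoordinate

open Finset
open scoped Nat

section Transfer

variable {ι : Type*} [DecidableEq ι] {i j : ι}

@[to_additive]
lemma prod_mul_eq_prod_mul_of_eq_off_pair [Fintype ι] {M : Type*} [CommMonoid M] {f g : ι → M}
    (hij : i ≠ j) (h : ∀ k, k ≠ i → k ≠ j → f k = g k) :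
    (∏ k, f k) * (g i * g j) = (∏ k, g k) * (f i * f j) := by
  have hsub : ({i, j} : Finset ι) ⊆ univ := subset_univ _
  rw [← prod_sdiff hsub (f := f), ← prod_sdiff hsub (f := g), prod_pair hij, prod_pair hij,
    prod_congr rfl fun k hk => h k (by simp_all) (by simp_all)]
  ac_rfl

/-- `α + eⱼ - eᵢ`; the truncated subtraction makes this a genuine move only when `1 ≤ α i`. -/
def transfer (i j : ι) (α : ι → ℕ) : ι → ℕ := α + Pi.single j 1 - Pi.single i 1

variable (α : ι → ℕ)

lemma transfer_apply_left (hij : i ≠ j) : transfer i j α i = α i - 1 := by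
  simp [transfer, hij]

lemma transfer_apply_right (hij : i ≠ j) : transfer i j α j = α j + 1 := by
  simp [transfer, hij.symm]

lemma transfer_apply_of_ne {k : ι} (hki : k ≠ i) (hkj : k ≠ j) : transfer i j α k = α k := by
  simp [transfer, hki, hkj]

lemma transfer_transfer (hij : i ≠ j) (hα : 1 ≤ α i) : transfer j i (transfer i j α) = α := by
  funext k
  rcases eq_or_ne k i with rfl | hki
  · rw [transfer_apply_right _ hij.symm, transfer_apply_left _ hij]; omega
  rcases eq_or_ne k j with rfl | hkj
  · rw [transfer_apply_left _ hij.symm, transfer_apply_right _ hij]; omega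
  · rw [transfer_apply_of_ne _ hkj hki, transfer_apply_of_ne _ hki hkj]

lemma sum_transfer [Fintype ι] (hij : i ≠ j) (hα : 1 ≤ α i) : ∑ k, transfer i j α k = ∑ k, α k := by
  have := sum_add_eq_sum_add_of_eq_off_pair hij fun k => transfer_apply_of_ne α (i := i) (j := j)
  rw [transfer_apply_left _ hij, transfer_apply_right _ hij] at this
  omega

lemma sum_natAbs_sub_transfer [Fintype ι] (hij : i ≠ j) (hα : 1 ≤ α i) :
    ∑ k, ((α k : ℤ) - transfer i j α k).natAbs = 2 := by
  rw [Fintype.sum_eq_add i j hij fun k hk => by simp [transfer_apply_of_ne α hk.1 hk.2],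
    transfer_apply_left _ hij, transfer_apply_right _ hij]
  omega

lemma mul_prod_factorial_transfer [Fintype ι] (hij : i ≠ j) (hα : 1 ≤ α i) :
    α i * ∏ k, (transfer i j α k)! = (α j + 1) * ∏ k, (α k)! := by
  have := prod_mul_eq_prod_mul_of_eq_off_pair hij
    fun k hki hkj => congrArg Nat.factorial (transfer_apply_of_ne α hki hkj)
  obtain ⟨a, ha⟩ : ∃ a, α i = a + 1 := ⟨α i - 1, by omega⟩
  rw [transfer_apply_left _ hij, transfer_apply_right _ hij, ha, Nat.add_sub_cancel,
    Nat.factorial_succ, Nat.factorial_succ (α j)] at this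
  rw [ha]
  refine Nat.eq_of_mul_eq_mul_right (by positivity : 0 < a ! * (α j)!) ?_
  linarith [this]

end Transfer

section Analytic

open Real

lemma one_lt_log_of_three_le {x : ℝ} (hx : 3 ≤ x) : 1 < log x := by
  rw [lt_log_iff_exp_lt (by linarith)]; linarith [exp_one_lt_d9]

lemma exp_one_mul_log_le {x : ℝ} (hx : 0 < x) : exp 1 * log x ≤ x := by
  simpa [exp_log hx] using exp_one_mul_le_exp (x := log x)

lemma nat_mul_log_sub_add_one_le_log_factorial {t : ℕ} (ht : 2 ≤ t) :
    t * log t - t + 1 ≤ log t ! := by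
  have ht' : (2 : ℝ) ≤ t := by exact_mod_cast ht
  have hexp : exp 2 ≤ 2 * π * t := by
    have h2 : exp 2 = exp 1 ^ 2 := by rw [← exp_nat_mul]; norm_num
    nlinarith [exp_one_lt_d9, exp_pos 1, pi_gt_three]
  have hlog : 2 ≤ log (2 * π) + log t := by
    rw [← log_mul (by positivity) (by positivity), le_log_iff_exp_le (by positivity)]
    exact hexp
  linarith [Stirling.le_log_factorial_stirling (show t ≠ 0 by omega)]

lemma three_mul_log_div_pred_le {x : ℝ} (hx : 3 ≤ x) :
    3 * log (x / (x - 1)) ≤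
      log (log x) - 3 * log (log (log x)) - 3 + 3 * log 3 + log (log x) / log x := by
  set L := log x
  set l := log L
  have hL1 : 1 < L := one_lt_log_of_three_le hx
  have hl : 0 < l := log_pos hL1
  have hlL : exp 1 * l ≤ L := exp_one_mul_log_le (by linarith)
  have hlog16 : log 16 = 4 * log 2 := by
    rw [show (16 : ℝ) = 2 ^ 4 by norm_num, log_pow]; norm_num
  rcases le_total x 16 with hx16 | hx16
  · -- `l ≤ (3/2) log 2`, so the convex part `l - 3 log l` dominates
    have hL16 : L ≤ 4 * log 2 := hlog16 ▸ log_le_log (by linarith) hx16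
    have hratio : log (x / (x - 1)) ≤ log 3 - log 2 := by
      rw [← log_div (by norm_num) (by norm_num)]
      refine log_le_log (by apply div_pos <;> linarith) ?_
      rw [div_le_div_iff₀ (by linarith) (by norm_num)]; linarith
    have hlogl : log l ≤ l - 1 := log_le_sub_one_of_pos hl
    have hl2 : 2 * l ≤ 3 * log 2 := by nlinarith [exp_one_gt_d9]
    have : 0 ≤ l / L := by positivity
    linarith
  · -- `l ≥ 1` and `3 L ≤ x - 1`, so the correction `l / L` dominates
    have hL16 : 4 * log 2 ≤ L := hlog16 ▸ log_le_log (by norm_num) hx16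
    have hl1 : 1 ≤ l := by
      rw [le_log_iff_exp_le (by linarith)]; linarith [exp_one_lt_d9, log_two_gt_d9]
    have hconvex : log l - log 3 ≤ l / 3 - 1 := by
      rw [← log_div hl.ne' (by norm_num)]; exact log_le_sub_one_of_pos (by positivity)
    have hratio : log (x / (x - 1)) ≤ 1 / (x - 1) := by
      refine (log_le_sub_one_of_pos (by apply div_pos <;> linarith)).trans_eq ?_
      rw [div_sub_one (by linarith)]; ring
    have hLx : 3 * L ≤ x - 1 := by
      have := log_le_sub_one_of_pos (show 0 < x / 16 by positivity)
      rw [log_div (by linarith) (by norm_num), hlog16] at this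
      linarith [log_two_lt_d9]
    have : 3 / (x - 1) ≤ l / L := by
      rw [div_le_div_iff₀ (by linarith) (by linarith)]; nlinarith
    linarith [show 3 * (1 / (x - 1)) = 3 / (x - 1) by ring]

lemma two_mul_log_sub_one_le {x : ℝ} (hx : 3 ≤ x) :
    2 * log x - 1 ≤
      3 * log x / log (log x) * log (3 * (x - 1) * log x / (exp 1 * x * log (log x))) := by
  have hL1 : 1 < log x := one_lt_log_of_three_le hx
  have hl : 0 < log (log x) := log_pos hL1
  have hcore := three_mul_log_div_pred_le hx
  have hx0 : x ≠ 0 := by positivity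
  have hx1 : x - 1 ≠ 0 := by linarith
  have hexpand : log (3 * (x - 1) * log x / (exp 1 * x * log (log x))) =
      log 3 - log (x / (x - 1)) + log (log x) - 1 - log (log (log x)) := by
    rw [log_div (by positivity) (by positivity), log_mul (by positivity) (by positivity),
      log_mul (by norm_num) hx1, log_mul (by positivity) hl.ne', log_mul (by positivity) hx0,
      log_exp, log_div hx0 hx1]
    ring
  rw [hexpand, div_mul_eq_mul_div, le_div_iff₀ hl]
  have : log (log x) / log x * log x = log (log x) := div_mul_cancel₀ _ (by positivity)
  nlinarith

lemma sq_mul_pow_le_factorial {x m δ : ℝ} (hx : 3 ≤ x) (hδ : 0 < δ) (hm : δ * x ≤ m) {t : ℕ}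
    (ht : 3 * m * log x / (δ * x * log (log x)) ≤ t) :
    x ^ 2 * (δ⁻¹ * m / (x - 1)) ^ t ≤ t ! := by
  set L := log x
  set l := log L
  set C := δ⁻¹ * m / (x - 1)
  set T := 3 * m * L / (δ * x * l)
  set R := 3 * (x - 1) * L / (exp 1 * x * l)
  have hL1 : 1 < L := one_lt_log_of_three_le hx
  have hl : 0 < l := log_pos hL1
  have hlL : exp 1 * l ≤ L := exp_one_mul_log_le (by linarith)
  have hm0 : 0 < m := by nlinarith
  have hx1 : 0 < x - 1 := by linarith
  have hC : 0 < C := div_pos (mul_pos (inv_pos.2 hδ) hm0) hx1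
  have hTR : T = exp 1 * C * R := by
    simp only [T, C, R]; field_simp [hx1.ne']
  have hR : 1 ≤ R := by
    rw [le_div_iff₀ (by positivity)]; nlinarith
  have hT3 : 3 * L / l ≤ T := by
    rw [div_le_div_iff₀ hl (by positivity)]
    nlinarith [mul_le_mul_of_nonneg_right hm (by positivity : 0 ≤ 3 * L * l)]
  have hTe : 3 * exp 1 ≤ T := by
    refine le_trans ?_ hT3
    rw [le_div_iff₀ hl]; linarith
  have ht2 : 2 ≤ t := by
    have : (1 : ℝ) < t := by linarith [exp_one_gt_d9]
    exact_mod_cast this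
  have hlogR : 0 ≤ log R := log_nonneg hR
  have hRt : log R ≤ log t - 1 - log C := by
    have := log_le_log (by positivity) ht
    rw [hTR, log_mul (by positivity) (by positivity), log_mul (by positivity) hC.ne',
      log_exp] at this
    linarith
  have hmain : 2 * L - 1 ≤ t * (log t - 1 - log C) :=
    calc 2 * L - 1 ≤ 3 * L / l * log R := two_mul_log_sub_one_le hx
      _ ≤ T * log R := mul_le_mul_of_nonneg_right hT3 hlogR
      _ ≤ t * (log t - 1 - log C) := mul_le_mul ht hRt hlogR (by positivity)
  rw [← log_le_log_iff (by positivity) (by positivity), log_mul (by positivity) (by positivity),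
    log_pow, log_pow, Nat.cast_ofNat]
  linarith [nat_mul_log_sub_add_one_le_log_factorial ht2]

end Analytic

section Distribution

variable {n m : ℕ} {δ : ℝ} {w : (Fin n → ℕ) → ℝ}

noncomputable def mass (w : (Fin n → ℕ) → ℝ) (α : Fin n → ℕ) : ℝ :=
  w α / ∏ k, ((α k)! : ℝ)

noncomputable def tail (m : ℕ) (w : (Fin n → ℕ) → ℝ) (i : Fin n) (a : ℕ) : ℝ :=
  ∑ α ∈ (Nat.antidiagonalTuple n m).filter (fun α => a ≤ α i), mass w α

def StepBounded (m : ℕ) (δ : ℝ) (w : (Fin n → ℕ) → ℝ) : Prop :=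
  ∀ α β : Fin n → ℕ, (∑ k, α k = m) → (∑ k, β k = m) →
    (∑ k, ((α k : ℤ) - β k).natAbs) = 2 → w α ≤ δ⁻¹ * w β

lemma mass_nonneg (hw : ∀ α, 0 ≤ w α) (α : Fin n → ℕ) : 0 ≤ mass w α :=
  div_nonneg (hw α) (by positivity)

lemma mul_mass_le_transfer (hstep : StepBounded m δ w) {i j : Fin n} (hij : i ≠ j)
    {α : Fin n → ℕ} (hαm : ∑ k, α k = m) (hα : 1 ≤ α i) :
    α i * mass w α ≤ δ⁻¹ * (transfer i j α j * mass w (transfer i j α)) := by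
  have hwα : w α ≤ δ⁻¹ * w (transfer i j α) :=
    hstep _ _ hαm ((sum_transfer α hij hα).trans hαm) (sum_natAbs_sub_transfer α hij hα)
  have hfac : (α i : ℝ) * ∏ k, ((transfer i j α k)! : ℝ) = (α j + 1) * ∏ k, ((α k)! : ℝ) := by
    exact_mod_cast mul_prod_factorial_transfer α hij hα
  calc α i * mass w α = w α * (α i / ∏ k, ((α k)! : ℝ)) := by unfold mass; ring
    _ ≤ δ⁻¹ * w (transfer i j α) * (α i / ∏ k, ((α k)! : ℝ)) := by gcongr
    _ = δ⁻¹ * (transfer i j α j * mass w (transfer i j α)) := by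
      rw [mass, transfer_apply_right α hij]
      field_simp
      push_cast
      linear_combination (δ⁻¹ * w (transfer i j α)) * hfac

lemma sum_mul_mass_le (hstep : StepBounded m δ w) {i j : Fin n} (hij : i ≠ j) (a : ℕ) :
    ∑ α ∈ (Nat.antidiagonalTuple n m).filter (fun α => a + 1 ≤ α i), α i * mass w α ≤
      δ⁻¹ * ∑ β ∈ (Nat.antidiagonalTuple n m).filter (fun β => a ≤ β i), β j * mass w β := by
  rw [mul_sum]
  calc ∑ α ∈ (Nat.antidiagonalTuple n m).filter (fun α => a + 1 ≤ α i), α i * mass w α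
      ≤ ∑ α ∈ (Nat.antidiagonalTuple n m).filter (fun α => a + 1 ≤ α i),
          δ⁻¹ * (transfer i j α j * mass w (transfer i j α)) := by
        refine sum_le_sum fun α hα => ?_
        simp only [mem_filter, Nat.mem_antidiagonalTuple] at hα
        exact mul_mass_le_transfer hstep hij hα.1 (by omega)
    _ = ∑ β ∈ ((Nat.antidiagonalTuple n m).filter (fun β => a ≤ β i)).filter (fun β => 1 ≤ β j),
          δ⁻¹ * (β j * mass w β) := by
        refine sum_nbij' (transfer i j) (transfer j i) ?_ ?_ ?_ ?_ fun _ _ => rfl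
        · intro α hα
          simp only [mem_filter, Nat.mem_antidiagonalTuple] at hα ⊢
          rw [sum_transfer α hij (by omega), transfer_apply_left α hij,
            transfer_apply_right α hij]
          omega
        · intro β hβ
          simp only [mem_filter, Nat.mem_antidiagonalTuple] at hβ ⊢
          rw [sum_transfer β hij.symm hβ.2, transfer_apply_right β hij.symm]
          omega
        · intro α hα
          simp only [mem_filter] at hα
          exact transfer_transfer α hij (by omega)
        · intro β hβ
          simp only [mem_filter] at hβ
          exact transfer_transfer β hij.symm hβ.2
    _ = _ := by
        refine sum_filter_of_ne fun β _ hβ => ?_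
        contrapose! hβ
        simp [Nat.lt_one_iff.mp hβ]

lemma tail_recursion (hw : ∀ α, 0 ≤ w α) (hstep : StepBounded m δ w) (hδ : 0 ≤ δ)
    (i : Fin n) (a : ℕ) :
    ((n : ℝ) - 1) * ((a + 1) * tail m w i (a + 1)) ≤ δ⁻¹ * m * tail m w i a := by
  set Δ := Nat.antidiagonalTuple n m
  have hcard : ((univ.erase i).card : ℝ) = n - 1 := by
    rw [card_erase_of_mem (mem_univ i), card_univ, Fintype.card_fin, Nat.cast_pred i.pos]
  have hlow : (a + 1 : ℝ) * tail m w i (a + 1) ≤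
      ∑ α ∈ Δ.filter (fun α => a + 1 ≤ α i), α i * mass w α := by
    rw [tail, mul_sum]
    refine sum_le_sum fun α hα => mul_le_mul_of_nonneg_right ?_ (mass_nonneg hw α)
    exact_mod_cast (mem_filter.mp hα).2
  have hrest : ∀ β ∈ Δ, ∑ j ∈ univ.erase i, (β j : ℝ) ≤ m := by
    intro β hβ
    rw [← (Nat.mem_antidiagonalTuple.mp hβ), Nat.cast_sum]
    exact sum_le_sum_of_subset_of_nonneg (subset_univ _) fun _ _ _ => by positivity
  calc ((n : ℝ) - 1) * ((a + 1) * tail m w i (a + 1))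
      ≤ ∑ _j ∈ univ.erase i, ∑ α ∈ Δ.filter (fun α => a + 1 ≤ α i), α i * mass w α := by
        rw [sum_const, nsmul_eq_mul, hcard]
        exact mul_le_mul_of_nonneg_left hlow (by simp [hcard.symm])
    _ ≤ ∑ j ∈ univ.erase i, δ⁻¹ * ∑ β ∈ Δ.filter (fun β => a ≤ β i), β j * mass w β :=
        sum_le_sum fun j hj => sum_mul_mass_le hstep (ne_of_mem_erase hj).symm a
    _ = δ⁻¹ * ∑ β ∈ Δ.filter (fun β => a ≤ β i), (∑ j ∈ univ.erase i, (β j : ℝ)) * mass w β := by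
        rw [← mul_sum, sum_comm]
        simp only [sum_mul]
    _ ≤ δ⁻¹ * ∑ β ∈ Δ.filter (fun β => a ≤ β i), (m : ℝ) * mass w β := by
        gcongr with β hβ
        · exact mass_nonneg hw β
        · exact hrest β (mem_filter.mp hβ).1
    _ = δ⁻¹ * m * tail m w i a := by simp only [tail, Δ, mul_sum, mul_assoc]

lemma tail_le (hw : ∀ α, 0 ≤ w α) (hstep : StepBounded m δ w) (hδ : 0 ≤ δ) (hn : 2 ≤ n)
    (i : Fin n) (a : ℕ) :
    tail m w i a ≤
      (∑ α ∈ Nat.antidiagonalTuple n m, mass w α) * (δ⁻¹ * m / (n - 1)) ^ a / a ! := by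
  induction a with
  | zero => simp [tail]
  | succ a ih =>
    have hn1 : (0 : ℝ) < n - 1 := by
      rw [sub_pos, Nat.one_lt_cast]; omega
    have hpos : (0 : ℝ) < (n - 1) * (a + 1) := by positivity
    refine le_of_mul_le_mul_left ?_ hpos
    calc ((n : ℝ) - 1) * (a + 1) * tail m w i (a + 1)
        ≤ δ⁻¹ * m * tail m w i a := by
          rw [mul_assoc]; exact tail_recursion hw hstep hδ i a
      _ ≤ δ⁻¹ * m * ((∑ α ∈ Nat.antidiagonalTuple n m, mass w α) *
            (δ⁻¹ * m / (n - 1)) ^ a / a !) := by gcongr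
      _ = _ := by
          rw [Nat.factorial_succ, pow_succ]
          push_cast
          field_simp

lemma sum_mass_filter_sup_le_sum_tail (hw : ∀ α, 0 ≤ w α) {t : ℕ} (ht : 0 < t) :
    ∑ α ∈ (Nat.antidiagonalTuple n m).filter (fun α => t ≤ univ.sup α), mass w α ≤
      ∑ i, tail m w i t := by
  simp only [tail, sum_filter]
  rw [sum_comm]
  refine sum_le_sum fun α _ => ?_
  have hnonneg : ∀ k, 0 ≤ if t ≤ α k then mass w α else 0 :=
    fun k => ite_nonneg (mass_nonneg hw α) le_rfl
  split_ifs with hα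
  · obtain ⟨i, -, hi⟩ := (Finset.le_sup_iff ht).mp hα
    calc mass w α = if t ≤ α i then mass w α else 0 := (if_pos hi).symm
      _ ≤ ∑ k, if t ≤ α k then mass w α else 0 :=
        single_le_sum (fun k _ => hnonneg k) (mem_univ i)
  · exact sum_nonneg fun k _ => hnonneg k

theorem sum_mass_filter_sup_le (hn : 3 ≤ n) (hδ : 0 < δ) (hw : ∀ α, 0 ≤ w α)
    (hstep : StepBounded m δ w) (hmn : δ * n ≤ m) {t : ℕ}
    (ht : 3 * m * Real.log n / (δ * n * Real.log (Real.log n)) ≤ t) :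
    ∑ α ∈ (Nat.antidiagonalTuple n m).filter (fun α => t ≤ univ.sup α), mass w α ≤
      (∑ α ∈ Nat.antidiagonalTuple n m, mass w α) / n := by
  set Z := ∑ α ∈ Nat.antidiagonalTuple n m, mass w α
  set C := δ⁻¹ * m / (n - 1 : ℝ)
  have hn' : (3 : ℝ) ≤ n := by exact_mod_cast hn
  have ht0 : 0 < t := by
    have hL := one_lt_log_of_three_le hn'
    have hm : (0 : ℝ) < m := by nlinarith
    have hT : 0 < 3 * m * Real.log n / (δ * n * Real.log (Real.log n)) := by
      have := Real.log_pos hL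
      apply div_pos <;> positivity
    exact_mod_cast hT.trans_le ht
  have hZ : 0 ≤ Z := sum_nonneg fun α _ => mass_nonneg hw α
  calc _ ≤ ∑ i, tail m w i t := sum_mass_filter_sup_le_sum_tail hw ht0
    _ ≤ ∑ _i : Fin n, Z * C ^ t / t ! :=
        sum_le_sum fun i _ => tail_le hw hstep hδ.le (by omega) i t
    _ = Z * (n * C ^ t / t !) := by
        rw [sum_const, card_univ, Fintype.card_fin, nsmul_eq_mul]; ring
    _ ≤ Z / n := by
        rw [le_div_iff₀ (by positivity), mul_assoc]
        refine mul_le_of_le_one_right hZ ?_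
        rw [div_mul_eq_mul_div, mul_comm, ← mul_assoc, ← sq, div_le_one (by positivity)]
        exact sq_mul_pow_le_factorial hn' hδ hmn ht

end Distribution

end LargeCoordinate

theorem large_coordinate_improbable_general (m n : ℕ) (hn : 3 ≤ n)
    (δ : ℝ) (hδ0 : 0 < δ)
    (w : (Fin n → ℕ) → ℝ) (hw : ∀ α, 0 ≤ w α)
    (hprob : ∑ α ∈ Finset.Nat.antidiagonalTuple n m,
        w α / ∏ i, ((α i).factorial : ℝ) = 1)
    (hstep : ∀ α β : Fin n → ℕ, (∑ i, α i = m) → (∑ i, β i = m) →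
        (∑ i, ((α i : ℤ) - β i).natAbs) = 2 → w α ≤ δ⁻¹ * w β)
    (hmn : δ * n ≤ (m : ℝ)) :
    ∑ α ∈ (Finset.Nat.antidiagonalTuple n m).filter
        (fun α => 3 * m * Real.log n / (δ * n * Real.log (Real.log n)) ≤
          ((Finset.univ.sup α : ℕ) : ℝ)),
      w α / ∏ i, ((α i).factorial : ℝ) ≤ 1 / (n : ℝ) := by
  have h := LargeCoordinate.sum_mass_filter_sup_le hn hδ0 hw hstep hmn (Nat.le_ceil _)
  simp only [Nat.ceil_le] at h
  simpa [LargeCoordinate.mass, hprob] using h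

/-- Theorem 1.8: Let `Δ_{m,n}` be the nonnegative integer vectors
summing to `m`, and let `P(α) = w(α)/(α₁!⋯αₙ!)` be a probability measure whose
weights satisfy `w(α) ≤ δ⁻¹ w(β)` whenever `∑|αᵢ - βᵢ| = 2`. If `m ≥ δn`, then
the probability that some coordinate is at least `3m ln n/(δ n ln ln n)` is at
most `1/n`. -/
theorem large_coordinate_improbable (m n : ℕ) (hm : 0 < m) (hn : 3 ≤ n)
    (δ : ℝ) (hδ0 : 0 < δ) (hδ1 : δ ≤ 1)
    (w : (Fin n → ℕ) → ℝ) (hw : ∀ α, 0 ≤ w α)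
    (hprob : ∑ α ∈ Finset.Nat.antidiagonalTuple n m,
        w α / ∏ i, ((α i).factorial : ℝ) = 1)
    (hstep : ∀ α β : Fin n → ℕ, (∑ i, α i = m) → (∑ i, β i = m) →
        (∑ i, ((α i : ℤ) - β i).natAbs) = 2 → w α ≤ δ⁻¹ * w β)
    (hmn : δ * n ≤ (m : ℝ)) :
    ∑ α ∈ (Finset.Nat.antidiagonalTuple n m).filter
        (fun α => 3 * m * Real.log n / (δ * n * Real.log (Real.log n)) ≤
          ((Finset.univ.sup α : ℕ) : ℝ)),
      w α / ∏ i, ((α i).factorial : ℝ) ≤ 1 / (n : ℝ) :=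
  large_coordinate_improbable_general m n hn δ hδ0 w hw hprob hstep hmn
end

section
/- With Δ_{m,n}, w, and δ as in Theorem 1.8, define f(x_1,...,x_n) = Σ_{α ∈ Δ_{m,n}} (w(α)/(α_1!⋯α_n!)) x_1^{α_1}⋯x_n^{α_n} and f_i = ∂f/∂x_i. Then for all 1 ≤ i, j ≤ n and all x_1,...,x_n ≥ 0, f_i(x_1,...,x_n) ≤ δ^{-1} f_j(x_1,...,x_n). -/
/-!
Differentiating term by term and using `α_i / α! = 1 / (α - e_i)!`, the partial derivative is
`∂_i f(x) = ∑_{β ∈ Δ_{m-1,n}} w(β + e_i) x^β / β!`. For each `β` the multi-indices `β + e_i` and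
`β + e_j` either coincide or are at ℓ¹-distance 2, so `w(β + e_i) ≤ δ⁻¹ w(β + e_j)` (using
`δ⁻¹ ≥ 1` in the first case), and the monomials `x^β` are nonnegative for `x ≥ 0`.
-/

open Finset

section
variable {ι : Type*} [Fintype ι] [DecidableEq ι]

theorem fderiv_prod_pow_apply_single (α : ι → ℕ) (x : ι → ℝ) (i : ι) :
    fderiv ℝ (fun y : ι → ℝ => ∏ k, y k ^ α k) x (Pi.single i 1) =
      α i * ∏ k, x k ^ (α - Pi.single i 1 : ι → ℕ) k := by
  have hmon := HasFDerivAt.finsetProd (u := univ) (g := fun k (y : ι → ℝ) => y k ^ α k) fun k _ =>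
    (hasDerivAt_pow (α k) (x k)).comp_hasFDerivAt x (hasFDerivAt_apply (𝕜 := ℝ) k x)
  have herase : ∏ k ∈ univ.erase i, x k ^ (α - Pi.single i 1 : ι → ℕ) k =
      ∏ k ∈ univ.erase i, x k ^ α k :=
    prod_congr rfl fun k hk => by simp [Pi.single_eq_of_ne (ne_of_mem_erase hk)]
  rw [hmon.fderiv, _root_.sum_apply, sum_eq_single i, ← mul_prod_erase univ _ (mem_univ i), herase]
  · simp only [smul_apply, ContinuousLinearMap.proj_apply, Pi.single_eq_same,
      Pi.sub_apply, smul_eq_mul, mul_one]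
    ring
  · intro k _ hk
    simp [hk]
  · simp

theorem prod_factorial_add_single (β : ι → ℕ) (i : ι) :
    ∏ k, ((β + Pi.single i 1 : ι → ℕ) k).factorial = (β i + 1) * ∏ k, (β k).factorial := by
  rw [← mul_prod_erase univ _ (mem_univ i),
    ← mul_prod_erase univ (fun k => (β k).factorial) (mem_univ i),
    prod_congr rfl fun k hk => by
      rw [Pi.add_apply, Pi.single_eq_of_ne (ne_of_mem_erase hk), add_zero]]
  simp [Nat.factorial_succ, mul_assoc]

theorem fderiv_sum_mul_prod_pow_apply_single (A : Finset (ι → ℕ)) (c : (ι → ℕ) → ℝ)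
    (x : ι → ℝ) (i : ι) :
    fderiv ℝ (fun y : ι → ℝ => ∑ α ∈ A, c α * ∏ k, y k ^ α k) x (Pi.single i 1) =
      ∑ α ∈ A, c α * (α i * ∏ k, x k ^ (α - Pi.single i 1 : ι → ℕ) k) := by
  rw [fderiv_fun_sum fun α _ => by fun_prop, _root_.sum_apply]
  refine sum_congr rfl fun α _ => ?_
  rw [fderiv_const_mul (by fun_prop), smul_apply, smul_eq_mul, fderiv_prod_pow_apply_single]

theorem sum_add_single (β : ι → ℕ) (i : ι) :
    ∑ k, (β + Pi.single i 1 : ι → ℕ) k = ∑ k, β k + 1 := by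
  simp [sum_add_distrib]

theorem sum_natAbs_sub_add_single (β : ι → ℕ) {i j : ι} (hij : i ≠ j) :
    ∑ k, (((β + Pi.single i 1 : ι → ℕ) k : ℤ) - (β + Pi.single j 1 : ι → ℕ) k).natAbs = 2 := by
  have hterm : ∀ k, (((β + Pi.single i 1 : ι → ℕ) k : ℤ) - (β + Pi.single j 1 : ι → ℕ) k).natAbs
      = (Pi.single i 1 + Pi.single j 1 : ι → ℕ) k := by
    intro k
    rcases eq_or_ne k i with rfl | hki <;> rcases eq_or_ne k j with rfl | hkj <;>
      simp_all
  rw [sum_congr rfl fun k _ => hterm k]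
  simp [sum_add_distrib]

theorem weight_add_single_le_inv_mul (m : ℕ) {δ : ℝ} (hδ0 : 0 < δ) (hδ1 : δ ≤ 1)
    {w : (ι → ℕ) → ℝ} (hw : ∀ α, 0 ≤ w α)
    (hstep : ∀ α β : ι → ℕ, (∑ i, α i = m + 1) → (∑ i, β i = m + 1) →
        (∑ i, ((α i : ℤ) - β i).natAbs) = 2 → w α ≤ δ⁻¹ * w β)
    {β : ι → ℕ} (hβ : ∑ k, β k = m) (i j : ι) :
    w (β + Pi.single i 1) ≤ δ⁻¹ * w (β + Pi.single j 1) := by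
  rcases eq_or_ne i j with rfl | hij
  · exact le_mul_of_one_le_left (hw _) ((one_le_inv₀ hδ0).2 hδ1)
  · exact hstep _ _ (by rw [sum_add_single, hβ]) (by rw [sum_add_single, hβ])
      (sum_natAbs_sub_add_single β hij)

end

theorem sum_antidiagonalTuple_succ_eq_sum_add_single {M : Type*} [AddCommMonoid M] {n : ℕ}
    (m : ℕ) (i : Fin n) (g : (Fin n → ℕ) → M) (hg : ∀ α, α i = 0 → g α = 0) :
    ∑ α ∈ Nat.antidiagonalTuple n (m + 1), g α =
      ∑ β ∈ Nat.antidiagonalTuple n m, g (β + Pi.single i 1) := by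
  rw [← sum_image (s := Nat.antidiagonalTuple n m) (g := (· + Pi.single i 1))
    fun β _ γ _ h => add_right_cancel h]
  symm
  refine sum_subset (fun α hα => ?_) fun α hα hnot => hg α ?_
  · obtain ⟨β, hβ, rfl⟩ := mem_image.1 hα
    rw [Nat.mem_antidiagonalTuple] at hβ ⊢
    rw [sum_add_single, hβ]
  · by_contra hαi
    have hsplit : α - Pi.single i 1 + Pi.single i 1 = α := by
      funext k
      rcases eq_or_ne k i with rfl | hki
      · simp only [Pi.add_apply, Pi.sub_apply, Pi.single_eq_same]; omega
      · simp [hki]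
    refine hnot (mem_image.2 ⟨α - Pi.single i 1, ?_, hsplit⟩)
    rw [Nat.mem_antidiagonalTuple] at hα ⊢
    rw [← hsplit, sum_add_single] at hα
    omega

theorem fderiv_sum_antidiagonalTuple_succ_apply_single {n : ℕ} (m : ℕ) (c : (Fin n → ℕ) → ℝ)
    (x : Fin n → ℝ) (i : Fin n) :
    fderiv ℝ (fun y : Fin n → ℝ => ∑ α ∈ Nat.antidiagonalTuple n (m + 1),
        (c α / ∏ k, ((α k).factorial : ℝ)) * ∏ k, y k ^ α k) x (Pi.single i 1) =
      ∑ β ∈ Nat.antidiagonalTuple n m,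
        (c (β + Pi.single i 1) / ∏ k, ((β k).factorial : ℝ)) * ∏ k, x k ^ β k := by
  rw [fderiv_sum_mul_prod_pow_apply_single, sum_antidiagonalTuple_succ_eq_sum_add_single m i]
  · refine sum_congr rfl fun β _ => ?_
    have hfac : ∏ k, (((β + Pi.single i 1 : Fin n → ℕ) k).factorial : ℝ) =
        (β i + 1) * ∏ k, ((β k).factorial : ℝ) := by
      exact_mod_cast prod_factorial_add_single β i
    have hβi : (β + Pi.single i 1 : Fin n → ℕ) i = β i + 1 := by simp
    rw [add_tsub_cancel_right, hfac, hβi]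
    push_cast
    field_simp
  · intro α hαi
    simp [hαi]

/-- Lemma 3.1: with
`f(x) = ∑_{α ∈ Δ_{m,n}} (w(α)/(α₁!⋯αₙ!)) x^α` and `f_i = ∂f/∂x_i`, one has
`f_i(x) ≤ δ⁻¹ f_j(x)` for all `i, j` and all `x ≥ 0`. -/
theorem partial_derivatives_comparable (m n : ℕ)
    (δ : ℝ) (hδ0 : 0 < δ) (hδ1 : δ ≤ 1)
    (w : (Fin n → ℕ) → ℝ) (hw : ∀ α, 0 ≤ w α)
    (hstep : ∀ α β : Fin n → ℕ, (∑ i, α i = m) → (∑ i, β i = m) →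
        (∑ i, ((α i : ℤ) - β i).natAbs) = 2 → w α ≤ δ⁻¹ * w β)
    (i j : Fin n) (x : Fin n → ℝ) (hx : ∀ k, 0 ≤ x k) :
    fderiv ℝ
        (fun y : Fin n → ℝ =>
          ∑ α ∈ Finset.Nat.antidiagonalTuple n m,
            (w α / ∏ k, ((α k).factorial : ℝ)) * ∏ k, y k ^ α k)
        x (Pi.single i 1) ≤
      δ⁻¹ *
        fderiv ℝ
          (fun y : Fin n → ℝ =>
            ∑ α ∈ Finset.Nat.antidiagonalTuple n m,
              (w α / ∏ k, ((α k).factorial : ℝ)) * ∏ k, y k ^ α k)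
          x (Pi.single j 1) := by
  rcases m with _ | m
  · simp [Nat.antidiagonalTuple_zero_right]
  rw [fderiv_sum_antidiagonalTuple_succ_apply_single,
    fderiv_sum_antidiagonalTuple_succ_apply_single, mul_sum]
  refine sum_le_sum fun β hβ => ?_
  have hweight := weight_add_single_le_inv_mul m hδ0 hδ1 hw hstep
    (Nat.mem_antidiagonalTuple.1 hβ) i j
  have hmon : 0 ≤ (∏ k, x k ^ β k) / ∏ k, ((β k).factorial : ℝ) :=
    div_nonneg (prod_nonneg fun k _ => pow_nonneg (hx k) _) (by positivity)
  calc (w (β + Pi.single i 1) / ∏ k, ((β k).factorial : ℝ)) * ∏ k, x k ^ β k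
      = w (β + Pi.single i 1) * ((∏ k, x k ^ β k) / ∏ k, ((β k).factorial : ℝ)) := by ring
    _ ≤ δ⁻¹ * w (β + Pi.single j 1) * ((∏ k, x k ^ β k) / ∏ k, ((β k).factorial : ℝ)) :=
        mul_le_mul_of_nonneg_right hweight hmon
    _ = δ⁻¹ * ((w (β + Pi.single j 1) / ∏ k, ((β k).factorial : ℝ)) * ∏ k, x k ^ β k) := by
        ring
end

section
/- With the hypotheses of Lemma 3.1 and additionally f(1,...,1) = 1 (i.e., P is a probability measure), for all t ≥ 0 one has f(e^t, 1, ..., 1) ≤ ((e^t + (n−1)δ)/(1 + (n−1)δ))^m. -/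
/-!
Let `aⱼ` be the probability that the exponent of `x₁` equals `j`, so that
`f(x, 1, …, 1) = ∑ⱼ aⱼ xʲ`. Moving one unit of exponent from `x₁` to another variable and applying
the step condition gives `(n - 1) δ (j + 1) aⱼ₊₁ ≤ (m - j) aⱼ`, which is the recurrence satisfied
with equality by the binomial weights `pⱼ = C(m, j) cᵐ⁻ʲ` with `c = (n - 1) δ`. Hence `aⱼ / pⱼ` is
non-increasing, so `a` is stochastically dominated by the binomial law with weights
`pⱼ / (1 + c)ᵐ`, and `∑ⱼ aⱼ xʲ ≤ ((x + c) / (1 + c))ᵐ` for `x ≥ 1`.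
-/

open Finset
open Finset.Nat (antidiagonalTuple mem_antidiagonalTuple)

section LikelihoodRatio

variable {R : Type*} [CommRing R] [LinearOrder R] [IsStrictOrderedRing R]

theorem sum_mul_mul_sum_le_of_ratio_antitone {ι : Type*} [LinearOrder ι] (s : Finset ι)
    {a p g : ι → R} (hg : MonotoneOn g s)
    (hratio : ∀ i ∈ s, ∀ j ∈ s, i ≤ j → a j * p i ≤ a i * p j) :
    (∑ i ∈ s, a i * g i) * ∑ j ∈ s, p j ≤ (∑ i ∈ s, a i) * ∑ j ∈ s, p j * g j := by
  set X : ι → ι → R := fun i j => a i * p j * (g i - g j)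
  have hX : (∑ i ∈ s, a i * g i) * ∑ j ∈ s, p j - (∑ i ∈ s, a i) * ∑ j ∈ s, p j * g j
      = ∑ i ∈ s, ∑ j ∈ s, X i j := by
    simp only [X, sum_mul_sum, ← sum_sub_distrib]
    exact sum_congr rfl fun i _ => sum_congr rfl fun j _ => by ring
  -- symmetrising, `X i j + X j i = (aᵢ pⱼ - aⱼ pᵢ)(gᵢ - gⱼ) ≤ 0`
  have hsymm : ∀ i ∈ s, ∀ j ∈ s, X i j + X j i ≤ 0 := by
    intro i hi j hj
    rcases le_total i j with hij | hji
    · nlinarith [hratio i hi j hj hij, hg hi hj hij]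
    · nlinarith [hratio j hj i hi hji, hg hj hi hji]
  have : 2 * ∑ i ∈ s, ∑ j ∈ s, X i j ≤ 0 :=
    calc 2 * ∑ i ∈ s, ∑ j ∈ s, X i j
        = ∑ i ∈ s, ∑ j ∈ s, X i j + ∑ i ∈ s, ∑ j ∈ s, X j i := by rw [two_mul, sum_comm (f := X)]
      _ = ∑ i ∈ s, ∑ j ∈ s, (X i j + X j i) := by simp only [← sum_add_distrib]
      _ ≤ 0 := sum_nonpos fun i hi => sum_nonpos fun j hj => hsymm i hi j hj
  linarith

theorem ratio_antitone_of_succ {m : ℕ} {a p : ℕ → R} (hp : ∀ j ≤ m, 0 < p j)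
    (hsucc : ∀ j < m, a (j + 1) * p j ≤ a j * p (j + 1)) :
    ∀ i j, i ≤ j → j ≤ m → a j * p i ≤ a i * p j := by
  intro i j hij
  induction j, hij using Nat.le_induction with
  | base => exact fun _ => le_rfl
  | succ j hij ih =>
    intro hj
    have hpj : 0 < p j := hp j (by omega)
    refine le_of_mul_le_mul_right ?_ hpj
    calc a (j + 1) * p i * p j = a (j + 1) * p j * p i := by ring
      _ ≤ a j * p (j + 1) * p i := mul_le_mul_of_nonneg_right (hsucc j hj) (hp i (by omega)).le
      _ = a j * p i * p (j + 1) := by ring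
      _ ≤ a i * p j * p (j + 1) := mul_le_mul_of_nonneg_right (ih (by omega)) (hp (j + 1) hj).le
      _ = a i * p (j + 1) * p j := by ring

end LikelihoodRatio

theorem succ_mul_choose_succ_mul_pow {R : Type*} [CommRing R] (c : R) {m j : ℕ} (hj : j < m) :
    c * (j + 1) * (m.choose (j + 1) * c ^ (m - (j + 1)))
      = (m - j) * (m.choose j * c ^ (m - j)) := by
  have hchoose : (m.choose (j + 1) : R) * (j + 1) = m.choose j * (m - j) := by
    rw [← Nat.cast_sub hj.le, ← Nat.cast_succ, ← Nat.cast_mul, ← Nat.cast_mul,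
      Nat.choose_succ_right_eq]
  have hpow : c ^ (m - j) = c * c ^ (m - (j + 1)) := by
    rw [← pow_succ', show m - (j + 1) + 1 = m - j by omega]
  rw [hpow]
  linear_combination c * c ^ (m - (j + 1)) * hchoose

theorem sum_mul_pow_le_of_succ_mul_le {m : ℕ} {c x : ℝ} (hc : 0 ≤ c) (hx : 1 ≤ x)
    {a : ℕ → ℝ} (ha : ∀ j, 0 ≤ a j) (hsum : ∑ j ∈ range (m + 1), a j = 1)
    (hrec : ∀ j < m, c * (j + 1) * a (j + 1) ≤ (m - j) * a j) :
    ∑ j ∈ range (m + 1), a j * x ^ j ≤ ((x + c) / (1 + c)) ^ m := by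
  rcases hc.eq_or_lt with rfl | hc
  · calc ∑ j ∈ range (m + 1), a j * x ^ j ≤ ∑ j ∈ range (m + 1), a j * x ^ m :=
          sum_le_sum fun j hj => mul_le_mul_of_nonneg_left
            (pow_le_pow_right₀ hx (Nat.lt_succ_iff.mp (mem_range.mp hj))) (ha j)
      _ = ((x + 0) / (1 + 0)) ^ m := by rw [← sum_mul, hsum]; simp
  set p : ℕ → ℝ := fun j => m.choose j * c ^ (m - j)
  have hp : ∀ j ≤ m, 0 < p j := fun j hj => by
    have := Nat.choose_pos hj; positivity
  have hsucc : ∀ j < m, a (j + 1) * p j ≤ a j * p (j + 1) := by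
    intro j hj
    refine le_of_mul_le_mul_left ?_ (sub_pos.mpr (by exact_mod_cast hj) : (0 : ℝ) < m - j)
    calc (m - j) * (a (j + 1) * p j) = c * (j + 1) * a (j + 1) * p (j + 1) := by
          linear_combination a (j + 1) * (succ_mul_choose_succ_mul_pow c hj).symm
      _ ≤ (m - j) * a j * p (j + 1) := mul_le_mul_of_nonneg_right (hrec j hj) (hp _ hj).le
      _ = (m - j) * (a j * p (j + 1)) := by ring
  have hpsum : ∀ y : ℝ, ∑ j ∈ range (m + 1), p j * y ^ j = (y + c) ^ m := by
    intro y
    rw [add_pow]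
    exact sum_congr rfl fun j _ => by ring
  have key := sum_mul_mul_sum_le_of_ratio_antitone (range (m + 1)) (g := (x ^ ·))
    (fun i _ j _ hij => pow_le_pow_right₀ hx hij)
    (fun i _ j hj hij =>
      ratio_antitone_of_succ hp hsucc i j hij (Nat.lt_succ_iff.mp (mem_range.mp hj)))
  have h1 := hpsum 1
  simp only [one_pow, mul_one] at h1
  rw [h1, hsum, one_mul, hpsum x] at key
  rw [div_pow, le_div_iff₀ (by positivity)]
  exact key

section ExponentShift

variable {ι : Type*} [Fintype ι] [DecidableEq ι]

theorem sum_add_single_one (γ : ι → ℕ) (i : ι) :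
    ∑ k, (γ + Pi.single i 1 : ι → ℕ) k = ∑ k, γ k + 1 := by
  simp [sum_add_distrib]

theorem prod_factorial_add_single_one (γ : ι → ℕ) (i : ι) :
    ∏ k, ((γ + Pi.single i 1 : ι → ℕ) k).factorial = (γ i + 1) * ∏ k, (γ k).factorial := by
  have hk : ∀ k, ((γ + Pi.single i 1 : ι → ℕ) k).factorial
      = (if k = i then γ i + 1 else 1) * (γ k).factorial := by
    intro k
    rcases eq_or_ne k i with rfl | hki
    · simp [Nat.factorial_succ]
    · simp [hki]
  simp only [hk, prod_mul_distrib, prod_ite_eq', mem_univ, if_true]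

theorem sum_natAbs_sub_add_single_one {i k : ι} (hik : i ≠ k) (γ : ι → ℕ) :
    ∑ l, (((γ + Pi.single i 1 : ι → ℕ) l : ℤ) - (γ + Pi.single k 1 : ι → ℕ) l).natAbs = 2 := by
  have hl : ∀ l, (((γ + Pi.single i 1 : ι → ℕ) l : ℤ) - (γ + Pi.single k 1 : ι → ℕ) l).natAbs
      = (if l = i then 1 else 0) + (if l = k then 1 else 0) := by
    intro l
    rcases eq_or_ne l i with rfl | hli <;> rcases eq_or_ne l k with rfl | hlk <;>
      simp_all
  rw [sum_congr rfl fun l _ => hl l, sum_add_distrib]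
  simp

end ExponentShift

section Reindex

variable {n : ℕ} {R : Type*} [CommSemiring R]

theorem sum_antidiagonalTuple_succ_apply_mul (m : ℕ) (i : Fin n) (f : (Fin n → ℕ) → R) :
    ∑ β ∈ antidiagonalTuple n (m + 1), (β i : R) * f β
      = ∑ γ ∈ antidiagonalTuple n m, ((γ i : R) + 1) * f (γ + Pi.single i 1) := by
  symm
  refine sum_bij_ne_zero (fun γ _ _ => γ + Pi.single i 1) ?_ ?_ ?_ ?_
  · intro γ hγ _
    rw [mem_antidiagonalTuple] at hγ ⊢
    rw [sum_add_single_one, hγ]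
  · intro γ _ _ γ' _ _ h
    exact add_right_cancel h
  · intro β hβ hne
    have hβi : 1 ≤ β i := Nat.one_le_iff_ne_zero.mpr fun h => hne (by simp [h])
    have hsplit : β - Pi.single i 1 + Pi.single i 1 = β := by
      refine tsub_add_cancel_of_le fun k => ?_
      rcases eq_or_ne k i with rfl | hki
      · simpa using hβi
      · simp [hki]
    refine ⟨β - Pi.single i 1, ?_, ?_, hsplit⟩
    · rw [mem_antidiagonalTuple] at hβ ⊢
      have := sum_add_single_one (β - Pi.single i 1) i
      rw [hsplit, hβ] at this
      omega
    · rwa [hsplit, Pi.sub_apply, Pi.single_eq_same, ← Nat.cast_succ, Nat.succ_eq_add_one,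
        Nat.sub_add_cancel hβi]
  · intro γ _ _
    simp

end Reindex

section Weights

variable {ι : Type*} [Fintype ι] [DecidableEq ι]

noncomputable def polyCoeff (w : (ι → ℕ) → ℝ) (α : ι → ℕ) : ℝ := w α / ∏ k, ((α k).factorial : ℝ)

def StepBounded (m : ℕ) (δ : ℝ) (w : (ι → ℕ) → ℝ) : Prop :=
  ∀ α β : ι → ℕ, (∑ i, α i = m) → (∑ i, β i = m) →
    (∑ i, ((α i : ℤ) - β i).natAbs) = 2 → w α ≤ δ⁻¹ * w β

theorem succ_mul_polyCoeff_add_single_one (w : (ι → ℕ) → ℝ) (γ : ι → ℕ) (i : ι) :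
    ((γ i : ℝ) + 1) * polyCoeff w (γ + Pi.single i 1)
      = w (γ + Pi.single i 1) / ∏ k, ((γ k).factorial : ℝ) := by
  rw [polyCoeff, ← Nat.cast_prod, prod_factorial_add_single_one, Nat.cast_mul, Nat.cast_prod]
  push_cast
  field_simp

theorem StepBounded.mul_succ_mul_polyCoeff_le {m : ℕ} {δ : ℝ} {w : (ι → ℕ) → ℝ}
    (hstep : StepBounded (m + 1) δ w) (hδ : 0 < δ) {γ : ι → ℕ} (hγ : ∑ k, γ k = m) {i k : ι}
    (hik : i ≠ k) :
    δ * (((γ k : ℝ) + 1) * polyCoeff w (γ + Pi.single k 1))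
      ≤ ((γ i : ℝ) + 1) * polyCoeff w (γ + Pi.single i 1) := by
  have h := hstep (γ + Pi.single k 1) (γ + Pi.single i 1) (by rw [sum_add_single_one, hγ])
    (by rw [sum_add_single_one, hγ]) (sum_natAbs_sub_add_single_one hik.symm γ)
  rw [succ_mul_polyCoeff_add_single_one, succ_mul_polyCoeff_add_single_one, ← mul_div_assoc]
  gcongr
  exact (le_inv_mul_iff₀ hδ).mp h

end Weights

section Marginal

variable {n : ℕ}

noncomputable def exponentMarginal (w : (Fin n → ℕ) → ℝ) (m : ℕ) (i : Fin n) (j : ℕ) : ℝ :=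
  ∑ α ∈ antidiagonalTuple n m with α i = j, polyCoeff w α

theorem succ_mul_exponentMarginal_succ (w : (Fin n → ℕ) → ℝ) (m : ℕ) (i₀ : Fin n) (j : ℕ) :
    ((j : ℝ) + 1) * exponentMarginal w (m + 1) i₀ (j + 1)
      = ∑ γ ∈ antidiagonalTuple n m,
          ((γ i₀ : ℝ) + 1) * (if γ i₀ = j then polyCoeff w (γ + Pi.single i₀ 1) else 0) := by
  rw [exponentMarginal, sum_filter, mul_sum]
  have hshift := sum_antidiagonalTuple_succ_apply_mul m i₀
    (fun β => if β i₀ = j + 1 then polyCoeff w β else 0)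
  simp only [Pi.add_apply, Pi.single_eq_same, add_left_inj] at hshift
  rw [← hshift]
  refine sum_congr rfl fun β _ => ?_
  split_ifs with h
  · rw [h]; push_cast; rfl
  · simp

theorem sum_apply_mul_ite_polyCoeff_eq (w : (Fin n → ℕ) → ℝ) (m : ℕ) {i i₀ : Fin n} (h : i ≠ i₀)
    (j : ℕ) :
    ∑ β ∈ antidiagonalTuple n (m + 1), (β i : ℝ) * (if β i₀ = j then polyCoeff w β else 0)
      = ∑ γ ∈ antidiagonalTuple n m,
          ((γ i : ℝ) + 1) * (if γ i₀ = j then polyCoeff w (γ + Pi.single i 1) else 0) := by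
  rw [sum_antidiagonalTuple_succ_apply_mul]
  simp only [Pi.add_apply, Pi.single_eq_of_ne h.symm, add_zero]

theorem sum_erase_sum_apply_mul_ite_polyCoeff (w : (Fin n → ℕ) → ℝ) (m : ℕ) (i₀ : Fin n) (j : ℕ) :
    ∑ i ∈ univ.erase i₀, ∑ β ∈ antidiagonalTuple n m,
        (β i : ℝ) * (if β i₀ = j then polyCoeff w β else 0)
      = ((m : ℝ) - j) * exponentMarginal w m i₀ j := by
  rw [sum_comm, exponentMarginal, sum_filter, mul_sum]
  refine sum_congr rfl fun β hβ => ?_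
  rw [← sum_mul]
  split_ifs with hβj
  · have hsplit := add_sum_erase univ β (mem_univ i₀)
    rw [mem_antidiagonalTuple.mp hβ, hβj] at hsplit
    rw [← Nat.cast_sum, ← hsplit]
    push_cast
    ring
  · simp

theorem StepBounded.exponentMarginal_recurrence {m : ℕ} {δ : ℝ} {w : (Fin n → ℕ) → ℝ}
    (hstep : StepBounded m δ w) (hδ : 0 < δ) (i₀ : Fin n) {j : ℕ} (hj : j < m) :
    ((n : ℝ) - 1) * δ * (j + 1) * exponentMarginal w m i₀ (j + 1)
      ≤ (m - j) * exponentMarginal w m i₀ j := by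
  obtain ⟨m, rfl⟩ : ∃ k, m = k + 1 := ⟨m - 1, by omega⟩
  set S : Fin n → ℝ := fun i => ∑ γ ∈ antidiagonalTuple n m,
    ((γ i : ℝ) + 1) * (if γ i₀ = j then polyCoeff w (γ + Pi.single i 1) else 0)
  have hS : ∀ i ∈ univ.erase i₀, δ * S i₀ ≤ S i := by
    intro i hi
    rw [mul_sum]
    refine sum_le_sum fun γ hγ => ?_
    split_ifs with hγj
    · exact hstep.mul_succ_mul_polyCoeff_le hδ (mem_antidiagonalTuple.mp hγ) (ne_of_mem_erase hi)
    · simp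
  calc ((n : ℝ) - 1) * δ * (j + 1) * exponentMarginal w (m + 1) i₀ (j + 1)
      = ∑ i ∈ univ.erase i₀, δ * S i₀ := by
        rw [sum_erase_eq_sub (mem_univ i₀), sum_const, card_univ, Fintype.card_fin, nsmul_eq_mul,
          mul_assoc _ (j + 1 : ℝ), succ_mul_exponentMarginal_succ]
        ring
    _ ≤ ∑ i ∈ univ.erase i₀, S i := sum_le_sum hS
    _ = ∑ i ∈ univ.erase i₀, ∑ β ∈ antidiagonalTuple n (m + 1),
          (β i : ℝ) * (if β i₀ = j then polyCoeff w β else 0) :=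
        sum_congr rfl fun i hi =>
          (sum_apply_mul_ite_polyCoeff_eq w m (ne_of_mem_erase hi) j).symm
    _ = ((m + 1 : ℕ) - j) * exponentMarginal w (m + 1) i₀ j :=
        sum_erase_sum_apply_mul_ite_polyCoeff w (m + 1) i₀ j

theorem sum_polyCoeff_mul_eq_sum_exponentMarginal (w : (Fin n → ℕ) → ℝ) (m : ℕ) (i : Fin n)
    (g : ℕ → ℝ) :
    ∑ α ∈ antidiagonalTuple n m, polyCoeff w α * g (α i)
      = ∑ j ∈ range (m + 1), exponentMarginal w m i j * g j := by
  have hmaps : ∀ α ∈ antidiagonalTuple n m, α i ∈ range (m + 1) := fun α hα =>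
    mem_range_succ_iff.mpr <| (mem_antidiagonalTuple.mp hα) ▸ single_le_sum (by simp) (mem_univ i)
  rw [← sum_fiberwise_of_maps_to hmaps]
  refine sum_congr rfl fun j _ => ?_
  rw [exponentMarginal, sum_mul]
  exact sum_congr rfl fun α hα => by rw [(mem_filter.mp hα).2]

end Marginal

theorem exp_moment_bound_general (m n : ℕ) (hn : 0 < n)
    (δ : ℝ) (hδ0 : 0 < δ)
    (w : (Fin n → ℕ) → ℝ) (hw : ∀ α, 0 ≤ w α)
    (hstep : ∀ α β : Fin n → ℕ, (∑ i, α i = m) → (∑ i, β i = m) →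
        (∑ i, ((α i : ℤ) - β i).natAbs) = 2 → w α ≤ δ⁻¹ * w β)
    (hprob : ∑ α ∈ Finset.Nat.antidiagonalTuple n m,
        w α / ∏ i, ((α i).factorial : ℝ) = 1)
    (t : ℝ) (ht : 0 ≤ t) :
    ∑ α ∈ Finset.Nat.antidiagonalTuple n m,
        (w α / ∏ k, ((α k).factorial : ℝ)) *
          ∏ k : Fin n, (if k = ⟨0, hn⟩ then Real.exp t else 1) ^ α k ≤
      ((Real.exp t + ((n : ℝ) - 1) * δ) / (1 + ((n : ℝ) - 1) * δ)) ^ m := by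
  set i₀ : Fin n := ⟨0, hn⟩
  have hprod : ∀ α : Fin n → ℕ,
      ∏ k, (if k = i₀ then Real.exp t else 1) ^ α k = Real.exp t ^ α i₀ := fun α => by
    simp [ite_pow]
  have htotal := sum_polyCoeff_mul_eq_sum_exponentMarginal w m i₀ fun _ => 1
  simp only [mul_one] at htotal
  simp only [hprod]
  refine (sum_polyCoeff_mul_eq_sum_exponentMarginal w m i₀ (Real.exp t ^ ·)).trans_le ?_
  refine sum_mul_pow_le_of_succ_mul_le ?_ (Real.one_le_exp ht) ?_ (htotal.symm.trans hprob) ?_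
  · exact mul_nonneg (sub_nonneg.mpr (Nat.one_le_cast.mpr hn)) hδ0.le
  · exact fun j => sum_nonneg fun α _ => div_nonneg (hw α) (by positivity)
  · exact fun j hj => StepBounded.exponentMarginal_recurrence hstep hδ0 i₀ hj

/-- Lemma 3.2: with `f` as in Lemma 3.1 and `f(1,…,1) = 1`, for
all `t ≥ 0` one has `f(e^t, 1, …, 1) ≤ ((e^t + (n-1)δ)/(1 + (n-1)δ))^m`. -/
theorem exp_moment_bound (m n : ℕ) (hn : 0 < n)
    (δ : ℝ) (hδ0 : 0 < δ) (hδ1 : δ ≤ 1)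
    (w : (Fin n → ℕ) → ℝ) (hw : ∀ α, 0 ≤ w α)
    (hstep : ∀ α β : Fin n → ℕ, (∑ i, α i = m) → (∑ i, β i = m) →
        (∑ i, ((α i : ℤ) - β i).natAbs) = 2 → w α ≤ δ⁻¹ * w β)
    (hprob : ∑ α ∈ Finset.Nat.antidiagonalTuple n m,
        w α / ∏ i, ((α i).factorial : ℝ) = 1)
    (t : ℝ) (ht : 0 ≤ t) :
    ∑ α ∈ Finset.Nat.antidiagonalTuple n m,
        (w α / ∏ k, ((α k).factorial : ℝ)) *
          ∏ k : Fin n, (if k = ⟨0, hn⟩ then Real.exp t else 1) ^ α k ≤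
      ((Real.exp t + ((n : ℝ) - 1) * δ) / (1 + ((n : ℝ) - 1) * δ)) ^ m :=
  exp_moment_bound_general m n hn δ hδ0 w hw hstep hprob t ht
end

section
/- Let A be a symmetric n×n matrix with positive entries bounded by 1 below by δ > 0. Define a probability measure on spanning trees of K_n by P(τ) = weight(τ)/spt(A). Let a = (α_1,...,α_n) with α_1 > 0 and b = (α_1−1, α_2+1, α_3, ..., α_n), and let T(a) be the set of spanning trees with deg_i(τ) = α_i + 1 for all i. Then (α_2+1) P(T(b)) ≤ δ^{-1} α_1 P(T(a)). -/
/-!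
Double counting over edge moves. Let `τ` be a tree in `T(b)`, so vertex `1` has degree `a₁ + 2`,
and let `v` be a neighbour of `1` off the path from `1` to `0`; there are `a₁ + 1` such `v`.
Replacing the edge `1v` by `0v` gives a tree in `T(a)` whose weight is at least `δ` times that of
`τ`. The move is undone by replacing `0v` by `1v`, where `v` is now a neighbour of `0` off the path
from `0` to `1`, and a tree in `T(a)` has exactly `a₀` such neighbours. Hence
`δ (a₁ + 1) W(T(b)) ≤ a₀ W(T(a))`, and dividing by `spt(A)` gives the claim.
-/

open scoped Classical

open Finset SimpleGraph

namespace SimpleGraph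

variable {V : Type*} {G : SimpleGraph V} {u v x z : V}

lemma Reachable.deleteEdges_or (h : G.Reachable z x) :
    (G.deleteEdges {s(x, v)}).Reachable z x ∨ (G.deleteEdges {s(x, v)}).Reachable z v := by
  obtain ⟨P, hP⟩ := h.exists_isPath
  by_cases hxv : s(x, v) ∈ P.edges
  · have hv := P.snd_mem_support_of_mem_edges hxv
    have hx := Walk.endpoint_notMem_support_takeUntil hP hv (P.adj_of_mem_edges hxv).ne
    refine Or.inr ⟨(P.takeUntil v hv).toDeleteEdges _ fun e he hex => hx ?_⟩
    rw [Set.mem_singleton_iff] at hex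
    exact (P.takeUntil v hv).fst_mem_support_of_mem_edges (hex ▸ he)
  · exact Or.inl ⟨P.toDeleteEdges _ fun e he hex => hxv (Set.mem_singleton_iff.mp hex ▸ he)⟩

lemma IsAcyclic.not_reachable_deleteEdges (hG : G.IsAcyclic) (h : G.Adj x v) :
    ¬(G.deleteEdges {s(x, v)}).Reachable x v :=
  isAcyclic_iff_forall_adj_isBridge.mp hG h

def moveEdge (G : SimpleGraph V) (x u v : V) : SimpleGraph V :=
  G.deleteEdges {s(x, v)} ⊔ edge u v

lemma edgeSet_moveEdge (huv : u ≠ v) :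
    (G.moveEdge x u v).edgeSet = insert s(u, v) (G.edgeSet \ {s(x, v)}) := by
  rw [moveEdge, edgeSet_sup, edgeSet_deleteEdges, edgeSet_edge_of_ne huv, Set.union_singleton]

lemma moveEdge_adj_self (huv : u ≠ v) : (G.moveEdge x u v).Adj u v :=
  Or.inr ((edge_adj ..).mpr ⟨Or.inl ⟨rfl, rfl⟩, huv⟩)

lemma moveEdge_moveEdge (hxv : G.Adj x v) (hnadj : ¬G.Adj u v) (huv : u ≠ v) :
    (G.moveEdge x u v).moveEdge u x v = G := by
  rw [← edgeSet_inj, edgeSet_moveEdge hxv.ne, edgeSet_moveEdge huv,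
    Set.insert_sdiff_self_of_notMem (fun h => hnadj h.1), Set.insert_sdiff_singleton,
    Set.insert_eq_of_mem (G.mem_edgeSet.mpr hxv)]

lemma deleteEdges_moveEdge (hnadj : ¬G.Adj u v) (huv : u ≠ v) :
    (G.moveEdge x u v).deleteEdges {s(u, v)} = G.deleteEdges {s(x, v)} := by
  rw [← edgeSet_inj, edgeSet_deleteEdges, edgeSet_moveEdge huv,
    Set.insert_sdiff_self_of_notMem (fun h => hnadj h.1), edgeSet_deleteEdges]

section Finite

variable [Fintype V] {R : Type*} [CommSemiring R] [PartialOrder R] [IsOrderedRing R]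

noncomputable def weight (G : SimpleGraph V) (w : Sym2 V → R) : R := ∏ e ∈ G.edgeFinset, w e

lemma weight_nonneg {w : Sym2 V → R} (hw : ∀ e, 0 ≤ w e) : 0 ≤ G.weight w :=
  prod_nonneg fun e _ => hw e

variable [DecidableEq V]

/-- For a tree: the neighbours of `x` other than the next vertex on the path from `x` to `u`. -/
noncomputable def offPathNeighborFinset (G : SimpleGraph V) (x u : V) : Finset V :=
  {v ∈ G.neighborFinset x | (G.deleteEdges {s(x, v)}).Reachable x u}

lemma mem_offPathNeighborFinset :
    v ∈ G.offPathNeighborFinset x u ↔ G.Adj x v ∧ (G.deleteEdges {s(x, v)}).Reachable x u := by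
  rw [offPathNeighborFinset, mem_filter, mem_neighborFinset]

lemma IsTree.card_offPathNeighborFinset (hG : G.IsTree) (hxu : x ≠ u) :
    #(G.offPathNeighborFinset x u) = G.degree x - 1 := by
  obtain ⟨P, hP⟩ := hG.connected.exists_isPath x u
  cases P with
  | nil => exact absurd rfl hxu
  | @cons _ y _ hxy q =>
    have hq : ∀ w, s(x, w) ∉ q.edges := fun w h =>
      ((Walk.cons_isPath_iff _ _).mp hP).2 (q.fst_mem_support_of_mem_edges h)
    have hoff : G.offPathNeighborFinset x u = (G.neighborFinset x).erase y := by
      ext v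
      rw [mem_offPathNeighborFinset, mem_erase, mem_neighborFinset,
        reachable_deleteEdges_iff_exists_walk]
      constructor
      · rintro ⟨hxv, hreach⟩
        refine ⟨?_, hxv⟩
        rintro rfl
        have hyu : (G.deleteEdges {s(x, v)}).Reachable v u :=
          reachable_deleteEdges_iff_exists_walk.mpr ⟨q, hq v⟩
        exact hG.isAcyclic.not_reachable_deleteEdges hxv
          ((reachable_deleteEdges_iff_exists_walk.mpr hreach).trans hyu.symm)
      · rintro ⟨hvy, hxv⟩
        refine ⟨hxv, Walk.cons hxy q, ?_⟩
        simp [hq, hvy, hxv.ne']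
    rw [hoff, card_erase_of_mem (mem_neighborFinset _ _ _ |>.mpr hxy),
      card_neighborFinset_eq_degree]

lemma edgeFinset_moveEdge (huv : u ≠ v) :
    (G.moveEdge x u v).edgeFinset = insert s(u, v) (G.edgeFinset.erase s(x, v)) := by
  ext e
  simp [edgeSet_moveEdge huv, and_comm]

/-- Stated additively to avoid truncated subtraction at `x`. -/
lemma degree_moveEdge_add (hxv : G.Adj x v) (hnadj : ¬G.Adj u v) (huv : u ≠ v) (i : V) :
    (G.moveEdge x u v).degree i + (if i ∈ s(x, v) then 1 else 0) =
      G.degree i + if i ∈ s(u, v) then 1 else 0 := by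
  have hmem : s(x, v) ∈ G.edgeFinset := mem_edgeFinset.mpr hxv
  have hnotMem : s(u, v) ∉ G.edgeFinset.erase s(x, v) :=
    fun h => hnadj (mem_edgeFinset.mp (mem_of_mem_erase h))
  simp only [← card_incidenceFinset_eq_degree, incidenceFinset_eq_filter, card_filter,
    edgeFinset_moveEdge huv, sum_insert hnotMem]
  rw [← sum_erase_add G.edgeFinset _ hmem]
  ring

namespace IsAcyclic

lemma not_reachable_of_mem_offPathNeighborFinset (hG : G.IsAcyclic)
    (hv : v ∈ G.offPathNeighborFinset x u) : ¬(G.deleteEdges {s(x, v)}).Reachable u v :=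
  fun h => hG.not_reachable_deleteEdges (mem_offPathNeighborFinset.mp hv).1
    ((mem_offPathNeighborFinset.mp hv).2.trans h)

lemma ne_of_mem_offPathNeighborFinset (hG : G.IsAcyclic)
    (hv : v ∈ G.offPathNeighborFinset x u) : u ≠ v := by
  rintro rfl
  exact hG.not_reachable_of_mem_offPathNeighborFinset hv .rfl

lemma not_adj_of_mem_offPathNeighborFinset (hG : G.IsAcyclic) (hux : u ≠ x)
    (hv : v ∈ G.offPathNeighborFinset x u) : ¬G.Adj u v := fun h =>
  hG.not_reachable_of_mem_offPathNeighborFinset hv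
    (Adj.reachable ((deleteEdges_adj ..).mpr ⟨h, by simp [hux, h.ne]⟩))

lemma mem_offPathNeighborFinset_moveEdge (hG : G.IsAcyclic) (hux : u ≠ x)
    (hv : v ∈ G.offPathNeighborFinset x u) :
    v ∈ (G.moveEdge x u v).offPathNeighborFinset u x := by
  rw [mem_offPathNeighborFinset,
    deleteEdges_moveEdge (hG.not_adj_of_mem_offPathNeighborFinset hux hv)
      (hG.ne_of_mem_offPathNeighborFinset hv)]
  exact ⟨moveEdge_adj_self (hG.ne_of_mem_offPathNeighborFinset hv),
    (mem_offPathNeighborFinset.mp hv).2.symm⟩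

lemma moveEdge_moveEdge_of_mem (hG : G.IsAcyclic) (hux : u ≠ x)
    (hv : v ∈ G.offPathNeighborFinset x u) : (G.moveEdge x u v).moveEdge u x v = G :=
  moveEdge_moveEdge (mem_offPathNeighborFinset.mp hv).1
    (hG.not_adj_of_mem_offPathNeighborFinset hux hv) (hG.ne_of_mem_offPathNeighborFinset hv)

end IsAcyclic

lemma IsTree.moveEdge (hG : G.IsTree) (hv : v ∈ G.offPathNeighborFinset x u) :
    (G.moveEdge x u v).IsTree := by
  obtain ⟨-, hxu⟩ := mem_offPathNeighborFinset.mp hv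
  have hle : G.deleteEdges {s(x, v)} ≤ G.moveEdge x u v := le_sup_left
  have hxv : (G.moveEdge x u v).Reachable x v := (hxu.mono hle).trans
    (moveEdge_adj_self (hG.isAcyclic.ne_of_mem_offPathNeighborFinset hv)).reachable
  refine ⟨(connected_iff_exists_forall_reachable _).mpr ⟨x, fun z => ?_⟩,
    (hG.isAcyclic.anti (deleteEdges_le _)).sup_edge_of_not_reachable
      (hG.isAcyclic.not_reachable_of_mem_offPathNeighborFinset hv)⟩
  rcases (hG.connected.preconnected z x).deleteEdges_or (v := v) with h | h
  · exact (h.mono hle).symm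
  · exact hxv.trans (h.mono hle).symm

lemma mul_weight_le_weight_moveEdge {δ : R} {w : Sym2 V → R} (hδ : 0 ≤ δ) (hδw : ∀ e, δ ≤ w e)
    (hw1 : ∀ e, w e ≤ 1) (hxv : G.Adj x v) (hnadj : ¬G.Adj u v) (huv : u ≠ v) :
    δ * G.weight w ≤ (G.moveEdge x u v).weight w := by
  have hnotMem : s(u, v) ∉ G.edgeFinset.erase s(x, v) :=
    fun h => hnadj (mem_edgeFinset.mp (mem_of_mem_erase h))
  have hmem : s(x, v) ∈ G.edgeFinset := mem_edgeFinset.mpr hxv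
  rw [weight, weight, edgeFinset_moveEdge huv, prod_insert hnotMem, ← mul_prod_erase _ _ hmem,
    ← mul_assoc]
  refine mul_le_mul_of_nonneg_right ?_ (prod_nonneg fun e _ => hδ.trans (hδw e))
  calc δ * w s(x, v) ≤ δ := mul_le_of_le_one_right hδ (hw1 _)
    _ ≤ w s(u, v) := hδw _

theorem sum_card_offPathNeighborFinset_mul_weight_le {δ : R} {w : Sym2 V → R} (hδ : 0 ≤ δ)
    (hδw : ∀ e, δ ≤ w e) (hw1 : ∀ e, w e ≤ 1) (hux : u ≠ x) {S T : Finset (SimpleGraph V)}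
    (hS : ∀ G ∈ S, G.IsTree)
    (hST : ∀ G ∈ S, ∀ v ∈ G.offPathNeighborFinset x u, G.moveEdge x u v ∈ T) :
    δ * ∑ G ∈ S, #(G.offPathNeighborFinset x u) * G.weight w ≤
      ∑ G ∈ T, #(G.offPathNeighborFinset u x) * G.weight w := by
  let P := S.sigma fun G => G.offPathNeighborFinset x u
  let f : (_ : SimpleGraph V) × V → (_ : SimpleGraph V) × V := fun p => ⟨p.1.moveEdge x u p.2, p.2⟩
  have hP : ∀ p ∈ P, p.1.IsTree ∧ p.2 ∈ p.1.offPathNeighborFinset x u := fun p hp =>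
    ⟨hS _ (mem_sigma.mp hp).1, (mem_sigma.mp hp).2⟩
  have hinj : Set.InjOn f P := by
    rintro ⟨G, v⟩ hp ⟨G', v'⟩ hp' hf
    obtain ⟨hG, hv⟩ : G.IsTree ∧ v ∈ G.offPathNeighborFinset x u := hP _ hp
    obtain ⟨hG', hv'⟩ : G'.IsTree ∧ v' ∈ G'.offPathNeighborFinset x u := hP _ hp'
    simp only [f, Sigma.mk.injEq, heq_eq_eq] at hf
    obtain ⟨hf, rfl⟩ := hf
    have hGG' : G = G' := by
      rw [← hG.isAcyclic.moveEdge_moveEdge_of_mem hux hv, hf,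
        hG'.isAcyclic.moveEdge_moveEdge_of_mem hux hv']
    rw [hGG']
  have hmaps : P.image f ⊆ T.sigma fun G => G.offPathNeighborFinset u x := by
    simp only [subset_iff, mem_image, mem_sigma]
    rintro _ ⟨p, hp, rfl⟩
    obtain ⟨hG, hv⟩ := hP p hp
    exact ⟨hST _ (mem_sigma.mp hp).1 _ hv, hG.isAcyclic.mem_offPathNeighborFinset_moveEdge hux hv⟩
  calc δ * ∑ G ∈ S, #(G.offPathNeighborFinset x u) * G.weight w
      = ∑ p ∈ P, δ * p.1.weight w := by
        simp only [P, sum_sigma, sum_const, nsmul_eq_mul, mul_sum]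
        exact sum_congr rfl fun _ _ => mul_left_comm _ _ _
    _ ≤ ∑ p ∈ P, (f p).1.weight w := by
        refine sum_le_sum fun p hp => ?_
        obtain ⟨hG, hv⟩ := hP p hp
        exact mul_weight_le_weight_moveEdge hδ hδw hw1 (mem_offPathNeighborFinset.mp hv).1
          (hG.isAcyclic.not_adj_of_mem_offPathNeighborFinset hux hv)
          (hG.isAcyclic.ne_of_mem_offPathNeighborFinset hv)
    _ = ∑ q ∈ P.image f, q.1.weight w := by rw [sum_image hinj]
    _ ≤ ∑ q ∈ T.sigma fun G => G.offPathNeighborFinset u x, q.1.weight w :=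
        sum_le_sum_of_subset_of_nonneg hmaps fun q _ _ =>
          weight_nonneg fun e => hδ.trans (hδw e)
    _ = ∑ G ∈ T, #(G.offPathNeighborFinset u x) * G.weight w := by
        simp only [sum_sigma, sum_const, nsmul_eq_mul]

noncomputable def treesWithDegrees (α : V → ℕ) : Finset (SimpleGraph V) :=
  {G | G.IsTree ∧ ∀ i, G.degree i = α i + 1}

lemma moveEdge_mem_treesWithDegrees {α β : V → ℕ} (hux : u ≠ x) (hβu : β u + 1 = α u)
    (hβx : β x = α x + 1) (hβ : ∀ i, i ≠ u → i ≠ x → β i = α i)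
    (hG : G ∈ treesWithDegrees β) (hv : v ∈ G.offPathNeighborFinset x u) :
    G.moveEdge x u v ∈ treesWithDegrees α := by
  simp only [treesWithDegrees, mem_filter, mem_univ, true_and] at hG ⊢
  obtain ⟨hG, hdeg⟩ := hG
  have hxv := (mem_offPathNeighborFinset.mp hv).1
  have huv := hG.isAcyclic.ne_of_mem_offPathNeighborFinset hv
  refine ⟨hG.moveEdge hv, fun i => ?_⟩
  have h := degree_moveEdge_add hxv (hG.isAcyclic.not_adj_of_mem_offPathNeighborFinset hux hv)
    huv i
  rw [hdeg i] at h
  simp only [Sym2.mem_iff] at h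
  by_cases hiu : i = u
  · subst hiu
    simp only [hux, huv, or_self, if_false, true_or, if_true] at h
    omega
  by_cases hix : i = x
  · subst hix
    simp only [hux.symm, hxv.ne, or_self, if_false, true_or, if_true] at h
    omega
  simp only [hiu, hix, false_or] at h
  have := hβ i hiu hix
  split_ifs at h <;> omega

theorem mul_sum_weight_treesWithDegrees_le {δ : R} {w : Sym2 V → R} (hδ : 0 ≤ δ)
    (hδw : ∀ e, δ ≤ w e) (hw1 : ∀ e, w e ≤ 1) {α β : V → ℕ} (hux : u ≠ x)
    (hβu : β u + 1 = α u) (hβx : β x = α x + 1) (hβ : ∀ i, i ≠ u → i ≠ x → β i = α i) :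
    δ * β x * ∑ G ∈ treesWithDegrees β, G.weight w ≤
      α u * ∑ G ∈ treesWithDegrees α, G.weight w := by
  have hcard {γ : V → ℕ} {y z : V} (hyz : y ≠ z) (G) (hG : G ∈ treesWithDegrees γ) :
      #(G.offPathNeighborFinset y z) = γ y := by
    simp only [treesWithDegrees, mem_filter] at hG
    rw [hG.2.1.card_offPathNeighborFinset hyz, hG.2.2 y, Nat.add_sub_cancel]
  calc δ * β x * ∑ G ∈ treesWithDegrees β, G.weight w
      = δ * ∑ G ∈ treesWithDegrees β, #(G.offPathNeighborFinset x u) * G.weight w := by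
        rw [mul_assoc, mul_sum]
        exact congrArg _ (sum_congr rfl fun G hG => by rw [hcard hux.symm G hG])
    _ ≤ ∑ G ∈ treesWithDegrees α, #(G.offPathNeighborFinset u x) * G.weight w :=
        sum_card_offPathNeighborFinset_mul_weight_le hδ hδw hw1 hux
          (fun G hG => (mem_filter.mp hG).2.1)
          (fun G hG v hv => moveEdge_mem_treesWithDegrees hux hβu hβx hβ hG hv)
    _ = α u * ∑ G ∈ treesWithDegrees α, G.weight w := by
        rw [mul_sum]
        exact sum_congr rfl fun G hG => by rw [hcard hux G hG]

end Finite

end SimpleGraph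

/-- with `P(τ) = weight(τ)/spt(A)` on spanning trees of `Kₙ`,
`T(a)` the trees with `deg_i(τ) = aᵢ + 1`, `a₁ > 0`, and
`b = (a₁ - 1, a₂ + 1, a₃, …, aₙ)`, one has `(a₂+1) P(T(b)) ≤ δ⁻¹ a₁ P(T(a))`.
(Vertices `1, 2` of the paper are `0, 1 : Fin n`.) -/
theorem tree_degree_shift_inequality (n : ℕ) (hn : 2 ≤ n)
    (δ : ℝ) (hδ0 : 0 < δ)
    (A : Matrix (Fin n) (Fin n) ℝ)
    (hsymm : ∀ i j, A i j = A j i)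
    (hA : ∀ i j, δ ≤ A i j ∧ A i j ≤ 1)
    (a : Fin n → ℕ) (ha1 : 0 < a ⟨0, by omega⟩) :
    ((a ⟨1, by omega⟩ : ℝ) + 1) *
        ((∑ T : SimpleGraph (Fin n),
            if T.IsTree ∧
                (∀ i : Fin n, T.degree i =
                  Function.update (Function.update a ⟨0, by omega⟩
                      (a ⟨0, by omega⟩ - 1)) ⟨1, by omega⟩
                      (a ⟨1, by omega⟩ + 1) i + 1) then
              ∏ e ∈ Finset.univ.filter (fun e : Sym2 (Fin n) => e ∈ T.edgeSet),
                Sym2.lift ⟨fun i j => A i j, fun i j => hsymm i j⟩ e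
            else 0) /
          (∑ T : SimpleGraph (Fin n),
            if T.IsTree then
              ∏ e ∈ Finset.univ.filter (fun e : Sym2 (Fin n) => e ∈ T.edgeSet),
                Sym2.lift ⟨fun i j => A i j, fun i j => hsymm i j⟩ e
            else 0)) ≤
      δ⁻¹ * (a ⟨0, by omega⟩ : ℝ) *
        ((∑ T : SimpleGraph (Fin n),
            if T.IsTree ∧ (∀ i : Fin n, T.degree i = a i + 1) then
              ∏ e ∈ Finset.univ.filter (fun e : Sym2 (Fin n) => e ∈ T.edgeSet),
                Sym2.lift ⟨fun i j => A i j, fun i j => hsymm i j⟩ e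
            else 0) /
          (∑ T : SimpleGraph (Fin n),
            if T.IsTree then
              ∏ e ∈ Finset.univ.filter (fun e : Sym2 (Fin n) => e ∈ T.edgeSet),
                Sym2.lift ⟨fun i j => A i j, fun i j => hsymm i j⟩ e
            else 0)) := by
  set w : Sym2 (Fin n) → ℝ := Sym2.lift ⟨fun i j => A i j, fun i j => hsymm i j⟩
  set v₀ : Fin n := ⟨0, by omega⟩
  set v₁ : Fin n := ⟨1, by omega⟩
  have h01 : v₀ ≠ v₁ := by simp [v₀, v₁, Fin.ext_iff]
  have hw (e : Sym2 (Fin n)) : δ ≤ w e ∧ w e ≤ 1 := e.ind fun i j => hA i j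
  have key := mul_sum_weight_treesWithDegrees_le hδ0.le (fun e => (hw e).1) (fun e => (hw e).2)
    (α := a) (β := Function.update (Function.update a v₀ (a v₀ - 1)) v₁ (a v₁ + 1)) h01
    (by rw [Function.update_of_ne h01, Function.update_self]; omega) (by simp)
    (fun i h0 h1 => by simp [h0, h1])
  have hweight (T : SimpleGraph (Fin n)) : ∏ e ∈ univ.filter (· ∈ T.edgeSet), w e = T.weight w := by
    rw [weight, Set.filter_mem_univ_eq_toFinset]; rfl
  have htrees (α : Fin n → ℕ) :
      univ.filter (fun T : SimpleGraph (Fin n) => T.IsTree ∧ ∀ i, T.degree i = α i + 1) =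
        treesWithDegrees α := by
    ext; simp [treesWithDegrees]
  have hspt : 0 ≤ ∑ T ∈ univ.filter IsTree, T.weight w :=
    sum_nonneg fun T _ => weight_nonneg fun e => hδ0.le.trans (hw e).1
  simp only [hweight, ← sum_filter, htrees]
  rw [mul_div_assoc', mul_div_assoc']
  refine div_le_div_of_nonneg_right ?_ hspt
  rw [mul_assoc, le_inv_mul_iff₀ hδ0]
  simpa [mul_assoc] using key
end
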